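/- arXiv:0809.5130 — 7 statements merged into one kernel-verified Lean document; each statement's English description precedes it below -/
import Mathlib

section
/- Let B be a unital C*-algebra with increasing projections {p_n}, let J be the associated closed ideal (norm closure of {x : ∃n, p_n x = x p_n = x}) and A its idealizer. Define D_0 = {a ∈ B : ∀n ∃m ≥ n, p_m a p_n = a p_n} and D = {a ∈ B : ∀n, a p_n ∈ J}. Then D_0 ⊆ D and A = D ∩ D*. -/
/-!
The ideal `J` is the closure of the increasing union `S = ⋃ n, p n * B * p n`, which is a
*-subsemigroup of `B`; hence `J` is closed under products and adjoints and `p n ∈ J`.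
If `a * p n ∈ J` and `p n * a ∈ J` for all `n`, then `a * x = (a * p n) * x ∈ J` and
`x * a = x * (p n * a) ∈ J` for `x ∈ p n * B * p n`, and continuity of multiplication by `a`
extends this from `S` to its closure `J`.
-/

namespace IncreasingProjections

variable {R : Type*} [Monoid R]

/-- `⋃ n, p n * R * p n`, written without products of sets. -/
def cornerUnion (p : ℕ → R) : Set R := {x | ∃ n, p n * x = x ∧ x * p n = x}

lemma self_mem_cornerUnion {p : ℕ → R} {n : ℕ} (hidem : IsIdempotentElem (p n)) :
    p n ∈ cornerUnion p :=
  ⟨n, hidem, hidem⟩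

lemma mul_mem_cornerUnion_of_le {p : ℕ → R}
    (hmono : ∀ m n, m ≤ n → p m * p n = p m ∧ p n * p m = p m) {a : R} {n m : ℕ}
    (hnm : n ≤ m) (hm : p m * (a * p n) = a * p n) : a * p n ∈ cornerUnion p :=
  ⟨m, hm, by rw [mul_assoc, (hmono n m hnm).1]⟩

lemma mul_mem_cornerUnion {p : ℕ → R}
    (hmono : ∀ m n, m ≤ n → p m * p n = p m ∧ p n * p m = p m) {x y : R}
    (hx : x ∈ cornerUnion p) (hy : y ∈ cornerUnion p) : x * y ∈ cornerUnion p := by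
  obtain ⟨n, hxl, hxr⟩ := hx
  obtain ⟨m, hyl, hyr⟩ := hy
  have hx : p (max n m) * x = x := by
    rw [← hxl, ← mul_assoc, (hmono n _ (le_max_left n m)).2]
  have hy : y * p (max n m) = y := by
    rw [← hyr, mul_assoc, (hmono m _ (le_max_right n m)).1]
  exact ⟨max n m, by rw [← mul_assoc, hx], by rw [mul_assoc, hy]⟩

lemma star_mem_cornerUnion [StarMul R] {p : ℕ → R} (hsa : ∀ n, IsSelfAdjoint (p n)) {x : R}
    (hx : x ∈ cornerUnion p) : star x ∈ cornerUnion p := by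
  obtain ⟨n, hl, hr⟩ := hx
  refine ⟨n, ?_, ?_⟩
  · rw [← (hsa n).star_eq, ← star_mul, hr]
  · rw [← (hsa n).star_eq, ← star_mul, hl]

lemma star_mem_closure_cornerUnion [StarMul R] [TopologicalSpace R] [ContinuousStar R]
    {p : ℕ → R} (hsa : ∀ n, IsSelfAdjoint (p n)) {x : R}
    (hx : x ∈ closure (cornerUnion p)) :
    star x ∈ closure (cornerUnion p) :=
  map_mem_closure continuous_star hx fun _ hy => star_mem_cornerUnion hsa hy

variable [TopologicalSpace R] [ContinuousMul R]

lemma mul_mem_closure_cornerUnion {p : ℕ → R}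
    (hmono : ∀ m n, m ≤ n → p m * p n = p m ∧ p n * p m = p m) {x y : R}
    (hx : x ∈ closure (cornerUnion p)) (hy : y ∈ closure (cornerUnion p)) :
    x * y ∈ closure (cornerUnion p) :=
  map_mem_closure₂ continuous_mul hx hy fun _ ha _ hb => mul_mem_cornerUnion hmono ha hb

lemma mul_mem_closure_cornerUnion_of_forall_mul_self_mem {p : ℕ → R}
    (hmono : ∀ m n, m ≤ n → p m * p n = p m ∧ p n * p m = p m) {a x : R}
    (ha : ∀ n, a * p n ∈ closure (cornerUnion p)) (hx : x ∈ closure (cornerUnion p)) :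
    a * x ∈ closure (cornerUnion p) := by
  refine Set.MapsTo.closure_left (fun y hy => ?_) (continuous_const_mul a) isClosed_closure hx
  obtain ⟨n, hl, hr⟩ := hy
  have hay : a * y = a * p n * y := by rw [mul_assoc, hl]
  rw [hay]
  exact mul_mem_closure_cornerUnion hmono (ha n) (subset_closure ⟨n, hl, hr⟩)

lemma mul_mem_closure_cornerUnion_of_forall_self_mul_mem {p : ℕ → R}
    (hmono : ∀ m n, m ≤ n → p m * p n = p m ∧ p n * p m = p m) {a x : R}
    (ha : ∀ n, p n * a ∈ closure (cornerUnion p)) (hx : x ∈ closure (cornerUnion p)) :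
    x * a ∈ closure (cornerUnion p) := by
  refine Set.MapsTo.closure_left (fun y hy => ?_) (continuous_mul_const a) isClosed_closure hx
  obtain ⟨n, hl, hr⟩ := hy
  have hya : y * a = y * (p n * a) := by rw [← mul_assoc, hr]
  rw [hya]
  exact mul_mem_closure_cornerUnion hmono (subset_closure ⟨n, hl, hr⟩) (ha n)

end IncreasingProjections

open IncreasingProjections

theorem stmt5_general {B : Type*} [CStarAlgebra B]
    (p : ℕ → B)
    (hproj : ∀ n, IsSelfAdjoint (p n) ∧ IsIdempotentElem (p n))
    (hmono : ∀ m n, m ≤ n → p m * p n = p m ∧ p n * p m = p m)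
    (J : Set B) (hJ : J = closure {x : B | ∃ n, p n * x = x ∧ x * p n = x})
    (A : Set B) (hA : A = {a : B | (∀ x ∈ J, a * x ∈ J) ∧ ∀ x ∈ J, x * a ∈ J})
    (D₀ : Set B) (hD₀ : D₀ = {a : B | ∀ n, ∃ m ≥ n, p m * (a * p n) = a * p n})
    (D : Set B) (hD : D = {a : B | ∀ n, a * p n ∈ J}) :
    D₀ ⊆ D ∧ A = D ∩ {a : B | star a ∈ D} := by
  change J = closure (cornerUnion p) at hJ
  subst hJ hA hD₀ hD
  have hsa n : star (p n) = p n := (hproj n).1.star_eq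
  have hpJ n : p n ∈ closure (cornerUnion p) := subset_closure (self_mem_cornerUnion (hproj n).2)
  have hstar {x : B} (hx : x ∈ closure (cornerUnion p)) : star x ∈ closure (cornerUnion p) :=
    star_mem_closure_cornerUnion (fun n => (hproj n).1) hx
  refine ⟨fun a ha n => ?_, Set.ext fun a => ⟨?_, ?_⟩⟩
  · obtain ⟨m, hnm, hm⟩ := ha n
    exact subset_closure (mul_mem_cornerUnion_of_le hmono hnm hm)
  · rintro ⟨hleft, hright⟩
    refine ⟨fun n => hleft _ (hpJ n), fun n => ?_⟩
    simpa only [star_mul, hsa] using hstar (hright _ (hpJ n))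
  · rintro ⟨hD, hDstar⟩
    have hpa n : p n * a ∈ closure (cornerUnion p) := by
      simpa only [star_mul, hsa, star_star] using hstar (hDstar n)
    exact ⟨fun x => mul_mem_closure_cornerUnion_of_forall_mul_self_mem hmono hD,
      fun x => mul_mem_closure_cornerUnion_of_forall_self_mul_mem hmono hpa⟩

/-- With `B`, `p n`, `J` and the idealizer `A` as before, define
`D₀ = {a | ∀ n, ∃ m ≥ n, p m * a * p n = a * p n}` and `D = {a | ∀ n, a * p n ∈ J}`.
Then `D₀ ⊆ D` and `A = D ∩ D*`, where `D* = {a | star a ∈ D}` is the set of adjoints of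
elements of `D`. -/
theorem stmt5 {B : Type*} [CStarAlgebra B]
    (p : ℕ → B)
    (hproj : ∀ n, IsSelfAdjoint (p n) ∧ IsIdempotentElem (p n))
    (hmono : ∀ m n, m ≤ n → p m * p n = p m ∧ p n * p m = p m)
    (hne : ∀ n, p n ≠ 1)
    (J : Set B) (hJ : J = closure {x : B | ∃ n, p n * x = x ∧ x * p n = x})
    (A : Set B) (hA : A = {a : B | (∀ x ∈ J, a * x ∈ J) ∧ ∀ x ∈ J, x * a ∈ J})
    (D₀ : Set B) (hD₀ : D₀ = {a : B | ∀ n, ∃ m ≥ n, p m * (a * p n) = a * p n})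
    (D : Set B) (hD : D = {a : B | ∀ n, a * p n ∈ J}) :
    D₀ ⊆ D ∧ A = D ∩ {a : B | star a ∈ D} :=
  stmt5_general p hproj hmono J hJ A hA D₀ hD₀ D hD
end

section
/- Let x ∈ A ⊆ L(H) with J the closed ideal associated to increasing projections p_n ↑ I (strongly). If λ ∈ σ(x) \ σ(π_J(x)), then there exists a sequence {φ_r} of unit vectors, some n ≥ 1 and c > 0 with ‖p_n φ_r‖ ≥ c for all r, such that either ‖x φ_r − λ φ_r‖ → 0 or ‖x* φ_r − λ̄ φ_r‖ → 0. -/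
open Filter Topology
open scoped NNReal

/-!
Since `λ - x` is not invertible, either it or its adjoint is not bounded below (an operator that is
bounded below with adjoint bounded below is invertible), which gives unit vectors `φ r` with
`(λ - x) φ r → 0` or `(λ - x)* φ r → 0`. Multiplying by the inverse modulo `J` gives
`φ r + w (φ r) → 0` for some `w ∈ J`. Approximating `w` within `1/4` by some `u` with `u p_n = u`
forces `‖u (p n (φ r))‖ ≥ 1/2` eventually, so `‖p n (φ r)‖` stays bounded away from `0`.
-/

namespace ContinuousLinearMap

variable {𝕜 E : Type*} [RCLike 𝕜] [NormedAddCommGroup E]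

theorem isUnit_of_antilipschitz_of_antilipschitz_adjoint [InnerProductSpace 𝕜 E] [CompleteSpace E]
    (T : E →L[𝕜] E) {c d : ℝ≥0} (hT : AntilipschitzWith c T)
    (hT' : AntilipschitzWith d (adjoint T)) : IsUnit T := by
  rw [isUnit_iff_bijective, bijective_iff_dense_range_and_antilipschitz,
    Submodule.topologicalClosure_eq_top_iff, orthogonal_range, LinearMap.ker_eq_bot]
  exact ⟨hT'.injective, c, hT⟩

theorem exists_seq_norm_eq_one_tendsto_of_not_antilipschitz [NormedSpace 𝕜 E] {F : Type*}
    [NormedAddCommGroup F] [NormedSpace 𝕜 F] (T : E →L[𝕜] F) (hT : ∀ K, ¬AntilipschitzWith K T) :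
    ∃ φ : ℕ → E, (∀ r, ‖φ r‖ = 1) ∧ Tendsto (fun r => ‖T (φ r)‖) atTop (𝓝 0) := by
  have hsmall : ∀ r : ℕ, ∃ φ : E, ‖φ‖ = 1 ∧ ‖T φ‖ < 1 / (r + 1) := by
    intro r
    obtain ⟨x, hx⟩ : ∃ x, ¬‖x‖ ≤ (r + 1 : ℝ≥0) * ‖T x‖ :=
      not_forall.1 fun h => hT _ (T.antilipschitz_of_bound h)
    push_cast at hx
    have hx0 : x ≠ 0 := by rintro rfl; simp at hx
    have hxpos : 0 < ‖x‖ := norm_pos_iff.2 hx0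
    refine ⟨(‖x‖⁻¹ : 𝕜) • x, norm_smul_inv_norm hx0, ?_⟩
    rw [map_smul, norm_smul, norm_inv, RCLike.norm_ofReal, abs_of_pos hxpos, inv_mul_eq_div,
      div_lt_div_iff₀ hxpos (by positivity)]
    linarith
  choose φ hφ hTφ using hsmall
  exact ⟨φ, hφ, squeeze_zero (fun _ => norm_nonneg _) (fun r => (hTφ r).le)
    tendsto_one_div_add_atTop_nhds_zero_nat⟩

end ContinuousLinearMap

theorem star_mem_closure_setOf_mul_eq {R : Type*} [Monoid R] [StarMul R] [TopologicalSpace R]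
    [ContinuousStar R] {p : ℕ → R} (hp : ∀ n, IsSelfAdjoint (p n)) {v : R}
    (hv : v ∈ closure {y | ∃ n, p n * y = y}) : star v ∈ closure {y | ∃ n, y * p n = y} := by
  refine map_mem_closure continuous_star hv ?_
  rintro y ⟨n, hy⟩
  exact ⟨n, by rw [← (hp n).star_eq, ← star_mul, hy]⟩

section Localization

variable {𝕜 E : Type*} [NontriviallyNormedField 𝕜] [NormedAddCommGroup E] [NormedSpace 𝕜 E]
  {p : ℕ → E →L[𝕜] E}

theorem exists_pos_eventually_le_norm_apply_of_tendsto_add_apply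
    {w : E →L[𝕜] E} (hw : w ∈ closure {y | ∃ n, y * p n = y}) {φ : ℕ → E} (hφ : ∀ r, ‖φ r‖ = 1)
    (hlim : Tendsto (fun r => φ r + w (φ r)) atTop (𝓝 0)) :
    ∃ n, ∃ c > (0 : ℝ), ∀ᶠ r in atTop, c ≤ ‖p n (φ r)‖ := by
  obtain ⟨u, ⟨n, hu⟩, hwu⟩ := Metric.mem_closure_iff.1 hw (1 / 4) (by norm_num)
  rw [dist_eq_norm] at hwu
  refine ⟨n, 1 / (2 * (‖u‖ + 1)), by positivity, ?_⟩
  have hsmall := (tendsto_zero_iff_norm_tendsto_zero.1 hlim).eventually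
    (gt_mem_nhds (by norm_num : (0 : ℝ) < 1 / 4))
  filter_upwards [hsmall] with r hr
  have hsplit : φ r = (φ r + w (φ r)) - (w - u) (φ r) - u (p n (φ r)) := by
    rw [← mul_apply_eq_comp, hu, sub_apply]; abel
  have hwu' : ‖(w - u) (φ r)‖ ≤ 1 / 4 := by
    calc ‖(w - u) (φ r)‖ ≤ ‖w - u‖ * ‖φ r‖ := (w - u).le_opNorm _
      _ ≤ 1 / 4 := by rw [hφ r, mul_one]; exact hwu.le
  have hup : ‖u (p n (φ r))‖ ≤ (‖u‖ + 1) * ‖p n (φ r)‖ :=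
    (u.le_opNorm _).trans (by gcongr; linarith)
  have hnorm := norm_sub_le (φ r + w (φ r) - (w - u) (φ r)) (u (p n (φ r)))
  have hnorm' := norm_sub_le (φ r + w (φ r)) ((w - u) (φ r))
  rw [← hsplit, hφ r] at hnorm
  rw [div_le_iff₀ (by positivity)]
  linarith

theorem exists_localized_of_mul_eq_one_add {S z w : E →L[𝕜] E} (hzS : z * S = 1 + w)
    (hw : w ∈ closure {y | ∃ n, y * p n = y}) {φ : ℕ → E} (hφ : ∀ r, ‖φ r‖ = 1)
    (hSφ : Tendsto (fun r => ‖S (φ r)‖) atTop (𝓝 0)) :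
    ∃ (ψ : ℕ → E) (n : ℕ) (c : ℝ), 0 < c ∧ (∀ r, ‖ψ r‖ = 1) ∧ (∀ r, c ≤ ‖p n (ψ r)‖) ∧
      Tendsto (fun r => ‖S (ψ r)‖) atTop (𝓝 0) := by
  have hlim : Tendsto (fun r => φ r + w (φ r)) atTop (𝓝 0) := by
    have h := (z.continuous.tendsto 0).comp (tendsto_zero_iff_norm_tendsto_zero.2 hSφ)
    rw [map_zero] at h
    convert h using 2 with r
    simp [← mul_apply_eq_comp, hzS]
  obtain ⟨n, c, hc, hev⟩ := exists_pos_eventually_le_norm_apply_of_tendsto_add_apply hw hφ hlim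
  obtain ⟨N, hN⟩ := eventually_atTop.1 hev
  exact ⟨fun r => φ (r + N), n, c, hc, fun r => hφ _, fun r => hN _ (Nat.le_add_left N r),
    hSφ.comp (tendsto_add_atTop_nat N)⟩

end Localization

theorem stmt7_general {H : Type*} [NormedAddCommGroup H] [InnerProductSpace ℂ H] [CompleteSpace H]
    (p : ℕ → H →L[ℂ] H)
    (hproj : ∀ n, IsSelfAdjoint (p n) ∧ IsIdempotentElem (p n))
    (J : Set (H →L[ℂ] H))
    (hJ : J = closure {y : H →L[ℂ] H | ∃ n, p n * y = y ∧ y * p n = y})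
    (A : Set (H →L[ℂ] H))
    (x : H →L[ℂ] H) (lam : ℂ)
    (hlam : lam ∈ spectrum ℂ x)
    -- `lam ∉ σ(π_J(x))` : `lam • 1 - x` is invertible modulo `J`
    (hquot : ∃ y ∈ A, ∃ u ∈ J, ∃ v ∈ J,
      y * (lam • (1 : H →L[ℂ] H) - x) = 1 + u ∧ (lam • (1 : H →L[ℂ] H) - x) * y = 1 + v) :
    ∃ (φ : ℕ → H) (n : ℕ) (c : ℝ), 0 < c ∧ (∀ r, ‖φ r‖ = 1) ∧ (∀ r, c ≤ ‖p n (φ r)‖) ∧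
      (Tendsto (fun r => ‖x (φ r) - lam • φ r‖) atTop (𝓝 0) ∨
        Tendsto (fun r => ‖ContinuousLinearMap.adjoint x (φ r) - (starRingEnd ℂ) lam • φ r‖)
          atTop (𝓝 0)) := by
  obtain ⟨y, -, u, hu, v, hv, hyu, hyv⟩ := hquot
  set T : H →L[ℂ] H := lam • 1 - x with hT
  have hJ_sub : J ⊆ closure {y | ∃ n, p n * y = y} := hJ ▸ closure_mono fun y ⟨n, hy, _⟩ => ⟨n, hy⟩
  have hJ_sub' : J ⊆ closure {y | ∃ n, y * p n = y} := hJ ▸ closure_mono fun y ⟨n, _, hy⟩ => ⟨n, hy⟩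
  have hT_apply (φ : H) : ‖T φ‖ = ‖x φ - lam • φ‖ := by simp [hT, norm_sub_rev]
  have hTadj_apply (φ : H) :
      ‖(star T) φ‖ = ‖ContinuousLinearMap.adjoint x φ - (starRingEnd ℂ) lam • φ‖ := by
    simp [hT, star_sub, star_smul, ContinuousLinearMap.star_eq_adjoint, norm_sub_rev]
  have hT_unit : ¬IsUnit T := by
    simpa [Algebra.algebraMap_eq_smul_one] using spectrum.mem_iff.1 hlam
  by_cases hbelow : ∀ K, ¬AntilipschitzWith K T
  · obtain ⟨φ, hφ, hTφ⟩ := T.exists_seq_norm_eq_one_tendsto_of_not_antilipschitz hbelow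
    obtain ⟨ψ, n, c, hc, hψ, hloc, hTψ⟩ :=
      exists_localized_of_mul_eq_one_add hyu (hJ_sub' hu) hφ hTφ
    exact ⟨ψ, n, c, hc, hψ, hloc, Or.inl (by simpa only [hT_apply] using hTψ)⟩
  · obtain ⟨K, hK⟩ := not_forall_not.1 hbelow
    have hbelow' : ∀ K', ¬AntilipschitzWith K' ⇑(star T) := fun K' hK' =>
      hT_unit (T.isUnit_of_antilipschitz_of_antilipschitz_adjoint hK hK')
    have hyv' : star y * star T = 1 + star v := by
      simpa only [star_mul, star_add, star_one] using congrArg star hyv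
    have hv' := star_mem_closure_setOf_mul_eq (fun n => (hproj n).1) (hJ_sub hv)
    obtain ⟨φ, hφ, hTφ⟩ := (star T).exists_seq_norm_eq_one_tendsto_of_not_antilipschitz hbelow'
    obtain ⟨ψ, n, c, hc, hψ, hloc, hTψ⟩ := exists_localized_of_mul_eq_one_add hyv' hv' hφ hTφ
    exact ⟨ψ, n, c, hc, hψ, hloc, Or.inr (by simpa only [hTadj_apply] using hTψ)⟩

/-- With `H`, `p n`, `J`, and the idealizer `A` as before, suppose `x ∈ A` and
`λ ∈ σ(x) \ σ(π_J(x))`, i.e. `λ` is in the spectrum of `x` but `λ1 - x` is invertible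
modulo `J` (with inverse in `A`).  Then there is a sequence of unit vectors `φ r` that is
localized (`‖p n (φ r)‖ ≥ c > 0` for some `n` and all `r`) and satisfies either
`‖x φ_r - λ φ_r‖ → 0` or `‖x* φ_r - λ̄ φ_r‖ → 0`. -/
theorem stmt7 {H : Type*} [NormedAddCommGroup H] [InnerProductSpace ℂ H] [CompleteSpace H]
    (p : ℕ → H →L[ℂ] H)
    (hproj : ∀ n, IsSelfAdjoint (p n) ∧ IsIdempotentElem (p n))
    (hmono : ∀ m n, m ≤ n → p m * p n = p m ∧ p n * p m = p m)
    (hstrong : ∀ v : H, Tendsto (fun n => p n v) atTop (𝓝 v))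
    (J : Set (H →L[ℂ] H))
    (hJ : J = closure {y : H →L[ℂ] H | ∃ n, p n * y = y ∧ y * p n = y})
    (A : Set (H →L[ℂ] H))
    (hA : A = {a : H →L[ℂ] H | (∀ y ∈ J, a * y ∈ J) ∧ ∀ y ∈ J, y * a ∈ J})
    (x : H →L[ℂ] H) (hx : x ∈ A) (lam : ℂ)
    (hlam : lam ∈ spectrum ℂ x)
    -- `lam ∉ σ(π_J(x))` : `lam • 1 - x` is invertible modulo `J`
    (hquot : ∃ y ∈ A, ∃ u ∈ J, ∃ v ∈ J,
      y * (lam • (1 : H →L[ℂ] H) - x) = 1 + u ∧ (lam • (1 : H →L[ℂ] H) - x) * y = 1 + v) :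
    ∃ (φ : ℕ → H) (n : ℕ) (c : ℝ), 0 < c ∧ (∀ r, ‖φ r‖ = 1) ∧ (∀ r, c ≤ ‖p n (φ r)‖) ∧
      (Tendsto (fun r => ‖x (φ r) - lam • φ r‖) atTop (𝓝 0) ∨
        Tendsto (fun r => ‖ContinuousLinearMap.adjoint x (φ r) - (starRingEnd ℂ) lam • φ r‖)
          atTop (𝓝 0)) :=
  stmt7_general p hproj J hJ A x lam hlam hquot
end

section
/- Let J_1 and J_2 be closed two-sided ideals in a unital C*-algebra A and let J_3 = J_1 ∩ J_2. Then for every x ∈ A, the spectrum of x in A/J_3 equals the union of the spectra of x in A/J_1 and in A/J_2: σ_3(x) = σ_1(x) ∪ σ_2(x). -/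
/-!
Invertibility modulo `J₁ ∩ J₂` is invertibility modulo `J₁` and modulo `J₂`. One direction is
immediate since `J₁ ∩ J₂` lies in both ideals. Conversely, if `b₁` inverts `a` modulo `J₁` and
`b₂` inverts it modulo `J₂`, then `y = b₂ + b₁ - b₂ a b₁` satisfies
`1 - y a = (1 - b₂ a)(1 - b₁ a)` and `1 - a y = (1 - a b₂)(1 - a b₁)`; each product has a factor
in `J₁` and a factor in `J₂`, so it lies in `J₁ ∩ J₂` as both are two-sided ideals.
Applied to `ζ - x`, this gives the statement about spectra.
-/

section

variable {R S S₁ S₂ S₃ F F₁ F₂ F₃ : Type*} [Ring R] [Ring S] [Ring S₁] [Ring S₂] [Ring S₃]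
  [FunLike F R S] [RingHomClass F R S]
  [FunLike F₁ R S₁] [RingHomClass F₁ R S₁] [FunLike F₂ R S₂] [RingHomClass F₂ R S₂]
  [FunLike F₃ R S₃] [RingHomClass F₃ R S₃]

theorem isUnit_map_iff_of_surjective {f : F} (hf : Function.Surjective f) (a : R) :
    IsUnit (f a) ↔ ∃ b, f (a * b) = 1 ∧ f (b * a) = 1 := by
  simp only [map_mul]
  exact isUnit_iff_exists.trans hf.exists

theorem map_eq_one_iff_map_one_sub_eq_zero (f : F) (x : R) : f x = 1 ↔ f (1 - x) = 0 := by
  rw [map_sub, map_one, sub_eq_zero, eq_comm]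

theorem map_eq_one_iff_of_ker_eq_inf {f₁ : F₁} {f₂ : F₂} {f₃ : F₃}
    (hker : ∀ a, f₃ a = 0 ↔ f₁ a = 0 ∧ f₂ a = 0) (a : R) :
    f₃ a = 1 ↔ f₁ a = 1 ∧ f₂ a = 1 := by
  simpa only [map_sub, map_one, sub_eq_zero] using hker (a - 1)

theorem isUnit_map_iff_of_ker_eq_inf {f₁ : F₁} {f₂ : F₂} {f₃ : F₃}
    (h₁ : Function.Surjective f₁) (h₂ : Function.Surjective f₂) (h₃ : Function.Surjective f₃)
    (hker : ∀ a, f₃ a = 0 ↔ f₁ a = 0 ∧ f₂ a = 0) (a : R) :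
    IsUnit (f₃ a) ↔ IsUnit (f₁ a) ∧ IsUnit (f₂ a) := by
  simp only [isUnit_map_iff_of_surjective h₁, isUnit_map_iff_of_surjective h₂,
    isUnit_map_iff_of_surjective h₃, map_eq_one_iff_of_ker_eq_inf hker]
  constructor
  · rintro ⟨b, ⟨hab₁, hab₂⟩, hba₁, hba₂⟩
    exact ⟨⟨b, hab₁, hba₁⟩, ⟨b, hab₂, hba₂⟩⟩
  · rintro ⟨⟨b₁, hab₁, hba₁⟩, ⟨b₂, hab₂, hba₂⟩⟩
    have hright : 1 - a * (b₂ + b₁ - b₂ * a * b₁) = (1 - a * b₂) * (1 - a * b₁) := by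
      noncomm_ring
    have hleft : 1 - (b₂ + b₁ - b₂ * a * b₁) * a = (1 - b₂ * a) * (1 - b₁ * a) := by
      noncomm_ring
    simp only [map_eq_one_iff_map_one_sub_eq_zero] at hab₁ hba₁ hab₂ hba₂ ⊢
    refine ⟨b₂ + b₁ - b₂ * a * b₁, ⟨?_, ?_⟩, ?_, ?_⟩
    · rw [hright, map_mul, hab₁, mul_zero]
    · rw [hright, map_mul, hab₂, zero_mul]
    · rw [hleft, map_mul, hba₁, mul_zero]
    · rw [hleft, map_mul, hba₂, zero_mul]

end

theorem spectrum_map_eq_union_of_ker_eq_inf {𝕜 A B₁ B₂ B₃ F₁ F₂ F₃ : Type*} [CommSemiring 𝕜]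
    [Ring A] [Ring B₁] [Ring B₂] [Ring B₃] [Algebra 𝕜 A] [Algebra 𝕜 B₁] [Algebra 𝕜 B₂]
    [Algebra 𝕜 B₃] [FunLike F₁ A B₁] [AlgHomClass F₁ 𝕜 A B₁] [FunLike F₂ A B₂]
    [AlgHomClass F₂ 𝕜 A B₂] [FunLike F₃ A B₃] [AlgHomClass F₃ 𝕜 A B₃] {f₁ : F₁} {f₂ : F₂}
    {f₃ : F₃} (h₁ : Function.Surjective f₁) (h₂ : Function.Surjective f₂)
    (h₃ : Function.Surjective f₃) (hker : ∀ a, f₃ a = 0 ↔ f₁ a = 0 ∧ f₂ a = 0) (x : A) :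
    spectrum 𝕜 (f₃ x) = spectrum 𝕜 (f₁ x) ∪ spectrum 𝕜 (f₂ x) := by
  ext ζ
  simp only [Set.mem_union, spectrum.mem_iff, ← not_and_or, ← AlgHomClass.commutes f₁ ζ,
    ← AlgHomClass.commutes f₂ ζ, ← AlgHomClass.commutes f₃ ζ, ← map_sub]
  rw [isUnit_map_iff_of_ker_eq_inf h₁ h₂ h₃ hker]

/-- The quotient `A / J_i` is modelled by the codomain of the surjective *-homomorphism `π i`,
whose kernel is `J_i`. -/
theorem stmt8 {A B₁ B₂ B₃ : Type*} [CStarAlgebra A] [CStarAlgebra B₁] [CStarAlgebra B₂]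
    [CStarAlgebra B₃]
    (π₁ : A →⋆ₐ[ℂ] B₁) (π₂ : A →⋆ₐ[ℂ] B₂) (π₃ : A →⋆ₐ[ℂ] B₃)
    (h₁ : Function.Surjective π₁) (h₂ : Function.Surjective π₂)
    (h₃ : Function.Surjective π₃)
    (hker : ∀ a : A, π₃ a = 0 ↔ (π₁ a = 0 ∧ π₂ a = 0))
    (x : A) :
    spectrum ℂ (π₃ x) = spectrum ℂ (π₁ x) ∪ spectrum ℂ (π₂ x) := by
  exact spectrum_map_eq_union_of_ker_eq_inf h₁ h₂ h₃ hker x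
end

section
/- Let H = H_1 ⊗ H_2 be a Hilbert space tensor product, {P_n} an increasing sequence of finite-rank projections on H_1 converging strongly to I_1, and p_n = P_n ⊗ I_2. Then the closed ideal J associated to {p_n} equals the closed linear span of all operators A_1 ⊗ A_2 with A_1 compact on H_1 and A_2 bounded on H_2. -/
/-!
If `pₙ x pₙ = x`, expanding the finite-rank projection `Pₙ = ∑ᵢ |eᵢ⟩⟨eᵢ|` on both sides gives
`x = ∑ᵢⱼ |eᵢ⟩⟨eⱼ| ⊗ (tp eᵢ)* x (tp eⱼ)`, a finite sum of elementary tensors with a rank-one first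
factor. Conversely `A₁ ⊗ A₂` is the norm limit of `pₙ (A₁ ⊗ A₂) pₙ = (Pₙ A₁ Pₙ) ⊗ A₂`, because
`Pₙ A₁ Pₙ → A₁` in norm when `A₁` is compact. Since the corners `{x | pₙ x = x = x pₙ}` increase,
their union is already a linear subspace, so both closures agree.
-/

open Filter Topology

section CompactOperator

variable {𝕜 E F G ι : Type*} [RCLike 𝕜] [NormedAddCommGroup E] [NormedSpace 𝕜 E]
  [NormedAddCommGroup F] [NormedSpace 𝕜 F] [NormedAddCommGroup G] [NormedSpace 𝕜 G]

/- Strong convergence of a bounded family is uniform on the relatively compact set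
`K '' closedBall 0 1`, by a finite `δ`-net argument. -/
theorem tendsto_comp_of_isCompactOperator {l : Filter ι} {Q : ι → E →L[𝕜] F} {C : ℝ}
    (hC : ∀ i, ‖Q i‖ ≤ C) (hQ : ∀ v, Tendsto (fun i => Q i v) l (𝓝 0))
    {K : G →L[𝕜] E} (hK : IsCompactOperator K) :
    Tendsto (fun i => Q i ∘L K) l (𝓝 0) := by
  rw [NormedAddGroup.tendsto_nhds_zero]
  intro ε hε
  set δ := ε / (2 * (|C| + 1)) with hδ
  have hδpos : 0 < δ := by positivity
  have hCδ : C * δ ≤ ε / 2 := by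
    rw [hδ, mul_div_assoc', div_le_div_iff₀ (by positivity) two_pos]
    nlinarith [le_abs_self C]
  obtain ⟨S, hS, hKS⟩ := hK.image_closedBall_subset_compact 1
  obtain ⟨t, -, ht, hcover⟩ :=
    Metric.finite_approx_of_totallyBounded (hS.totallyBounded.subset hKS) δ hδpos
  have hnet : ∀ᶠ i in l, ∀ y ∈ t, ‖Q i y‖ < ε / 4 := by
    rw [eventually_all_finite ht]
    exact fun y _ => (NormedAddGroup.tendsto_nhds_zero.mp (hQ y)) _ (by positivity)
  filter_upwards [hnet] with i hi
  refine lt_of_le_of_lt (ContinuousLinearMap.opNorm_le_of_unit_norm (by positivity)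
    fun u hu => ?_) (by linarith : 3 * ε / 4 < ε)
  obtain ⟨y, hy, hKuy⟩ := Set.mem_iUnion₂.mp (hcover ⟨u, by simp [hu], rfl⟩)
  have hfar : ‖Q i (K u - y)‖ ≤ ε / 2 :=
    calc ‖Q i (K u - y)‖ ≤ C * ‖K u - y‖ := (Q i).le_of_opNorm_le (hC i) _
      _ ≤ C * δ := mul_le_mul_of_nonneg_left (mem_ball_iff_norm.mp hKuy).le
        ((norm_nonneg _).trans (hC i))
      _ ≤ ε / 2 := hCδ
  calc ‖(Q i ∘L K) u‖ = ‖Q i (K u - y) + Q i y‖ := by simp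
    _ ≤ ‖Q i (K u - y)‖ + ‖Q i y‖ := norm_add_le _ _
    _ ≤ 3 * ε / 4 := by linarith [hi y hy]

end CompactOperator

theorem InnerProductSpace.isCompactOperator_rankOne {𝕜 E : Type*} [RCLike 𝕜]
    [NormedAddCommGroup E] [InnerProductSpace 𝕜 E] (a b : E) :
    IsCompactOperator (InnerProductSpace.rankOne 𝕜 a b) :=
  (isCompactOperator_of_locallyCompactSpace_dom (innerSL 𝕜 b)).clm_comp (.toSpanSingleton 𝕜 a)

theorem norm_mul_sq_le_of_isSelfAdjoint {R : Type*} [NonUnitalNormedRing R] [StarRing R]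
    [CStarRing R] (a : R) {q : R} (hq : IsSelfAdjoint q) (hq1 : ‖q‖ ≤ 1) :
    ‖a * q‖ ^ 2 ≤ ‖q * (star a * a)‖ :=
  calc ‖a * q‖ ^ 2 = ‖star (a * q) * (a * q)‖ := by rw [CStarRing.norm_star_mul_self, sq]
    _ = ‖q * (star a * a) * q‖ := by simp only [star_mul, hq.star_eq, mul_assoc]
    _ ≤ ‖q * (star a * a)‖ * ‖q‖ := norm_mul_le _ _
    _ ≤ ‖q * (star a * a)‖ := mul_le_of_le_one_right (norm_nonneg _) hq1

section StarProjection

variable {𝕜 E ι : Type*} [RCLike 𝕜] [NormedAddCommGroup E] [InnerProductSpace 𝕜 E]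
  [CompleteSpace E] {l : Filter ι} {P : ι → E →L[𝕜] E}

theorem tendsto_one_sub_mul_of_isCompactOperator (hP : ∀ i, IsStarProjection (P i))
    (hPv : ∀ v, Tendsto (fun i => P i v) l (𝓝 v)) {K : E →L[𝕜] E}
    (hK : IsCompactOperator K) : Tendsto (fun i => (1 - P i) * K) l (𝓝 0) := by
  refine tendsto_comp_of_isCompactOperator (fun i => (hP i).one_sub.norm_le) (fun v => ?_) hK
  simpa using (tendsto_const_nhds (x := v)).sub (hPv v)

/- The C*-identity `‖K (1 - Pᵢ)‖² ≤ ‖(1 - Pᵢ) K* K‖` reduces this to the left-sided version for the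
compact operator `K* K`, which avoids Schauder's theorem. -/
theorem tendsto_mul_one_sub_of_isCompactOperator (hP : ∀ i, IsStarProjection (P i))
    (hPv : ∀ v, Tendsto (fun i => P i v) l (𝓝 v)) {K : E →L[𝕜] E}
    (hK : IsCompactOperator K) : Tendsto (fun i => K * (1 - P i)) l (𝓝 0) := by
  have hKK : IsCompactOperator (star K * K) := hK.clm_comp (star K)
  have hsqrt : Tendsto (fun i => √‖(1 - P i) * (star K * K)‖) l (𝓝 0) := by
    simpa using ((tendsto_one_sub_mul_of_isCompactOperator hP hPv hKK).norm).sqrt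
  refine squeeze_zero_norm (fun i => Real.le_sqrt_of_sq_le ?_) hsqrt
  exact norm_mul_sq_le_of_isSelfAdjoint K (hP i).one_sub.isSelfAdjoint (hP i).one_sub.norm_le

theorem tendsto_mul_mul_of_isCompactOperator (hP : ∀ i, IsStarProjection (P i))
    (hPv : ∀ v, Tendsto (fun i => P i v) l (𝓝 v)) {K : E →L[𝕜] E}
    (hK : IsCompactOperator K) : Tendsto (fun i => P i * K * P i) l (𝓝 K) := by
  have hdecomp : ∀ i, P i * K * P i = K - ((1 - P i) * K + P i * (K * (1 - P i))) :=
    fun i => by noncomm_ring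
  have hright : Tendsto (fun i => P i * (K * (1 - P i))) l (𝓝 0) :=
    squeeze_zero_norm (fun i => (norm_mul_le _ _).trans
      (mul_le_of_le_one_left (norm_nonneg _) (hP i).norm_le))
      (tendsto_zero_iff_norm_tendsto_zero.mp
        (tendsto_mul_one_sub_of_isCompactOperator hP hPv hK))
  simpa [hdecomp] using tendsto_const_nhds.sub
    ((tendsto_one_sub_mul_of_isCompactOperator hP hPv hK).add hright)

end StarProjection

section Corner

variable (R : Type*) {A : Type*} [Semiring R] [Semiring A] [Module R A] [SMulCommClass R A A]
  [IsScalarTower R A A]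

def cornerSubmodule (e : A) : Submodule R A where
  carrier := {x | e * x = x ∧ x * e = x}
  zero_mem' := by simp
  add_mem' := by
    rintro x y ⟨hx₁, hx₂⟩ ⟨hy₁, hy₂⟩
    exact ⟨by rw [mul_add, hx₁, hy₁], by rw [add_mul, hx₂, hy₂]⟩
  smul_mem' := by
    rintro c x ⟨hx₁, hx₂⟩
    exact ⟨by rw [mul_smul_comm, hx₁], by rw [smul_mul_assoc, hx₂]⟩

variable {R}

theorem mem_cornerSubmodule {e x : A} : x ∈ cornerSubmodule R e ↔ e * x = x ∧ x * e = x :=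
  Iff.rfl

theorem cornerSubmodule_mono {e f : A} (hef : e * f = e ∧ f * e = e) :
    cornerSubmodule R e ≤ cornerSubmodule R f := by
  rintro x ⟨hx₁, hx₂⟩
  exact ⟨by rw [← hx₁, ← mul_assoc, hef.2], by rw [← hx₂, mul_assoc, hef.1]⟩

theorem IsIdempotentElem.mul_mul_mem_cornerSubmodule {e : A} (he : IsIdempotentElem e) (x : A) :
    e * x * e ∈ cornerSubmodule R e :=
  ⟨by simp only [← mul_assoc, he.eq], by rw [mul_assoc, he.eq]⟩

theorem setOf_exists_eq_iSup_cornerSubmodule {ι : Type*} [SemilatticeSup ι] [Nonempty ι]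
    {p : ι → A} (hp : ∀ m n, m ≤ n → p m * p n = p m ∧ p n * p m = p m) :
    {x | ∃ n, p n * x = x ∧ x * p n = x} = ↑(⨆ n, cornerSubmodule R (p n)) := by
  rw [Submodule.coe_iSup_of_directed _
    (Monotone.directed_le fun m n h => cornerSubmodule_mono (hp m n h))]
  ext x
  simp [mem_cornerSubmodule]

end Corner

section OperatorTensor

variable {𝕜 H₁ H₂ H F : Type*} [RCLike 𝕜]
  [NormedAddCommGroup H₁] [NormedSpace 𝕜 H₁] [NormedAddCommGroup H₂] [NormedSpace 𝕜 H₂]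
  [NormedAddCommGroup H] [NormedSpace 𝕜 H]
  {tp : H₁ →L[𝕜] H₂ →L[𝕜] H} {otimes : (H₁ →L[𝕜] H₁) → (H₂ →L[𝕜] H₂) → (H →L[𝕜] H)}

theorem ext_of_dense_span_tp [NormedAddCommGroup F] [NormedSpace 𝕜 F]
    (htp_dense : Dense (Submodule.span 𝕜 {v : H | ∃ x y, v = tp x y} : Set H))
    {S T : H →L[𝕜] F} (h : ∀ x y, S (tp x y) = T (tp x y)) : S = T := by
  refine ContinuousLinearMap.ext fun v => congrFun (S.continuous.ext_on htp_dense T.continuous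
    fun v hv => LinearMap.eqOn_span (f := (S : H →ₗ[𝕜] F)) (g := T) ?_ hv) v
  rintro _ ⟨x, y, rfl⟩
  exact h x y

variable (htp_dense : Dense (Submodule.span 𝕜 {v : H | ∃ x y, v = tp x y} : Set H))
  (hot : ∀ A₁ A₂ x y, otimes A₁ A₂ (tp x y) = tp (A₁ x) (A₂ y))
include htp_dense hot

theorem otimes_mul (A₁ B₁ : H₁ →L[𝕜] H₁) (A₂ B₂ : H₂ →L[𝕜] H₂) :
    otimes A₁ A₂ * otimes B₁ B₂ = otimes (A₁ * B₁) (A₂ * B₂) :=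
  ext_of_dense_span_tp htp_dense fun x y => by simp [hot]

theorem otimes_sub_left (A₁ B₁ : H₁ →L[𝕜] H₁) (A₂ : H₂ →L[𝕜] H₂) :
    otimes A₁ A₂ - otimes B₁ A₂ = otimes (A₁ - B₁) A₂ :=
  ext_of_dense_span_tp htp_dense fun x y => by simp [hot]

theorem otimes_sum_left {ι : Type*} (s : Finset ι) (A₁ : ι → H₁ →L[𝕜] H₁) (A₂ : H₂ →L[𝕜] H₂) :
    otimes (∑ i ∈ s, A₁ i) A₂ = ∑ i ∈ s, otimes (A₁ i) A₂ :=
  ext_of_dense_span_tp htp_dense fun x y => by simp [hot]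

theorem tendsto_otimes_left (hot_norm : ∀ A₁ A₂, ‖otimes A₁ A₂‖ ≤ ‖A₁‖ * ‖A₂‖) {ι : Type*}
    {l : Filter ι} {A₁ : ι → H₁ →L[𝕜] H₁} {B₁ : H₁ →L[𝕜] H₁} (h : Tendsto A₁ l (𝓝 B₁))
    (A₂ : H₂ →L[𝕜] H₂) : Tendsto (fun i => otimes (A₁ i) A₂) l (𝓝 (otimes B₁ A₂)) := by
  rw [tendsto_iff_norm_sub_tendsto_zero] at h ⊢
  refine squeeze_zero (fun i => norm_nonneg _) (fun i => ?_) (by simpa using h.mul_const ‖A₂‖)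
  rw [otimes_sub_left htp_dense hot]
  exact hot_norm _ _

end OperatorTensor

section HilbertTensor

open InnerProductSpace

variable {𝕜 H₁ H₂ H : Type*} [RCLike 𝕜]
  [NormedAddCommGroup H₁] [InnerProductSpace 𝕜 H₁]
  [NormedAddCommGroup H₂] [InnerProductSpace 𝕜 H₂] [CompleteSpace H₂]
  [NormedAddCommGroup H] [InnerProductSpace 𝕜 H] [CompleteSpace H]
  {tp : H₁ →L[𝕜] H₂ →L[𝕜] H} {otimes : (H₁ →L[𝕜] H₁) → (H₂ →L[𝕜] H₂) → (H →L[𝕜] H)}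

variable (htp_inner : ∀ x x' y y', inner 𝕜 (tp x y) (tp x' y') = inner 𝕜 x x' * inner 𝕜 y y')
include htp_inner

theorem adjoint_tp_apply (b x : H₁) (y : H₂) : (tp b).adjoint (tp x y) = inner 𝕜 b x • y :=
  ext_inner_left 𝕜 fun z => by
    rw [ContinuousLinearMap.adjoint_inner_right, htp_inner, inner_smul_right, mul_comm]

variable (htp_dense : Dense (Submodule.span 𝕜 {v : H | ∃ x y, v = tp x y} : Set H))
  (hot : ∀ A₁ A₂ x y, otimes A₁ A₂ (tp x y) = tp (A₁ x) (A₂ y))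
include htp_dense hot

theorem otimes_rankOne (a b : H₁) (A₂ : H₂ →L[𝕜] H₂) :
    otimes (rankOne 𝕜 a b) A₂ = tp a ∘L A₂ ∘L (tp b).adjoint :=
  ext_of_dense_span_tp htp_dense fun x y => by simp [hot, adjoint_tp_apply htp_inner]

theorem otimes_mul_mul_otimes_mem_span [CompleteSpace H₁] {P : H₁ →L[𝕜] H₁} (hP : IsStarProjection P)
    [FiniteDimensional 𝕜 (LinearMap.range (P : H₁ →ₗ[𝕜] H₁))] (T : H →L[𝕜] H) :
    otimes P 1 * T * otimes P 1 ∈ Submodule.span 𝕜 {T : H →L[𝕜] H |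
      ∃ (A₁ : H₁ →L[𝕜] H₁) (A₂ : H₂ →L[𝕜] H₂), IsCompactOperator ⇑A₁ ∧ T = otimes A₁ A₂} := by
  obtain ⟨_, hP_eq⟩ := isStarProjection_iff_eq_starProjection_range.mp hP
  set e := stdOrthonormalBasis 𝕜 P.range
  have hotimes_P : otimes P 1 = ∑ i, tp (e i) ∘L (tp (e i)).adjoint := by
    conv_lhs => rw [hP_eq, e.starProjection_eq_sum_rankOne, otimes_sum_left htp_dense hot]
    simp [otimes_rankOne htp_inner htp_dense hot, ContinuousLinearMap.one_def]
  rw [hotimes_P, Finset.sum_mul, Finset.sum_mul]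
  refine Submodule.sum_mem _ fun i _ => ?_
  rw [Finset.mul_sum]
  refine Submodule.sum_mem _ fun j _ => Submodule.subset_span
    ⟨rankOne 𝕜 (e i : H₁) (e j), (tp (e i)).adjoint ∘L T ∘L tp (e j),
      isCompactOperator_rankOne _ _, ?_⟩
  simp [otimes_rankOne htp_inner htp_dense hot, ContinuousLinearMap.mul_def,
    ContinuousLinearMap.comp_assoc]

end HilbertTensor

/-- Let `H = H₁ ⊗ H₂` be a Hilbert-space tensor product, axiomatized by a
continuous bilinear map `tp` with `⟪tp x y, tp x' y'⟫ = ⟪x,x'⟫⟪y,y'⟫` and dense span, and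
an operator tensor product `otimes` with `otimes A₁ A₂ (tp x y) = tp (A₁ x) (A₂ y)` and
`‖otimes A₁ A₂‖ ≤ ‖A₁‖ ‖A₂‖`.  If `P n` is an increasing sequence of finite-rank
orthogonal projections on `H₁` converging strongly to the identity and `p n = P n ⊗ I₂`,
then the closed ideal `J` associated to `p n` equals the closed linear span of the
operators `A₁ ⊗ A₂` with `A₁` compact and `A₂` bounded. -/
theorem stmt9 {H₁ H₂ H : Type*}
    [NormedAddCommGroup H₁] [InnerProductSpace ℂ H₁] [CompleteSpace H₁]
    [NormedAddCommGroup H₂] [InnerProductSpace ℂ H₂] [CompleteSpace H₂]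
    [NormedAddCommGroup H] [InnerProductSpace ℂ H] [CompleteSpace H]
    (tp : H₁ →L[ℂ] H₂ →L[ℂ] H)
    (htp_inner : ∀ x x' : H₁, ∀ y y' : H₂,
      (inner ℂ (tp x y) (tp x' y') : ℂ) = (inner ℂ x x' : ℂ) * (inner ℂ y y' : ℂ))
    (htp_dense : Dense (Submodule.span ℂ {v : H | ∃ x y, v = tp x y} : Set H))
    (otimes : (H₁ →L[ℂ] H₁) → (H₂ →L[ℂ] H₂) → (H →L[ℂ] H))
    (hot : ∀ (A₁ : H₁ →L[ℂ] H₁) (A₂ : H₂ →L[ℂ] H₂) (x : H₁) (y : H₂),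
      otimes A₁ A₂ (tp x y) = tp (A₁ x) (A₂ y))
    (hot_norm : ∀ A₁ A₂, ‖otimes A₁ A₂‖ ≤ ‖A₁‖ * ‖A₂‖)
    (P : ℕ → H₁ →L[ℂ] H₁)
    (hproj : ∀ n, IsSelfAdjoint (P n) ∧ IsIdempotentElem (P n))
    (hfinrank : ∀ n, FiniteDimensional ℂ ↥(LinearMap.range ((P n) : H₁ →ₗ[ℂ] H₁)))
    (hmono : ∀ m n, m ≤ n → P m * P n = P m ∧ P n * P m = P m)
    (hstrong : ∀ v : H₁, Tendsto (fun n => P n v) atTop (𝓝 v))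
    (p : ℕ → H →L[ℂ] H) (hp : ∀ n, p n = otimes (P n) 1) :
    closure {x : H →L[ℂ] H | ∃ n, p n * x = x ∧ x * p n = x}
      = closure (Submodule.span ℂ {T : H →L[ℂ] H |
          ∃ (A₁ : H₁ →L[ℂ] H₁) (A₂ : H₂ →L[ℂ] H₂),
            IsCompactOperator ⇑A₁ ∧ T = otimes A₁ A₂} : Set (H →L[ℂ] H)) := by
  have hP : ∀ n, IsStarProjection (P n) := fun n => ⟨(hproj n).2, (hproj n).1⟩
  have hp_mono : ∀ m n, m ≤ n → p m * p n = p m ∧ p n * p m = p m := fun m n hmn => by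
    simp only [hp, otimes_mul htp_dense hot, mul_one, (hmono m n hmn).1, (hmono m n hmn).2,
      and_self]
  rw [setOf_exists_eq_iSup_cornerSubmodule (R := ℂ) hp_mono]
  set J := ⨆ n, cornerSubmodule ℂ (p n)
  refine (closure_mono ?_).antisymm (closure_minimal ?_ isClosed_closure)
  · refine SetLike.coe_subset_coe.mpr (iSup_le fun n x ⟨hx₁, hx₂⟩ => ?_)
    have := hfinrank n
    have hx := otimes_mul_mul_otimes_mem_span htp_inner htp_dense hot (hP n) x
    rwa [← hp n, hx₁, hx₂] at hx
  · refine (Submodule.span_le (p := J.topologicalClosure)).mpr ?_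
    rintro _ ⟨A₁, A₂, hA₁, rfl⟩
    refine mem_closure_of_tendsto (tendsto_otimes_left htp_dense hot hot_norm
      (tendsto_mul_mul_of_isCompactOperator hP hstrong hA₁) A₂) (Eventually.of_forall fun n => ?_)
    have hcompress : otimes (P n * A₁ * P n) A₂ = p n * otimes A₁ A₂ * p n := by
      simp only [hp, otimes_mul htp_dense hot, mul_one, one_mul]
    rw [hcompress]
    exact le_iSup (fun n => cornerSubmodule ℂ (p n)) n
      (IsIdempotentElem.mul_mul_mem_cornerSubmodule (hp_mono n n le_rfl).1 _)
end

section
/- Let S, T be nonempty open subsets of X that are asymptotically independent, i.e. for all n ≥ 1 there exists m with S(n) ∩ T(n) ⊆ (S ∩ T)(m), where S(r) = {x : d(x,S) < r}. Then the associated ideals in the standard C*-algebra satisfy J_{S∩T} = J_S ∩ J_T, and hence σ_{S∩T}(A) = σ_S(A) ∪ σ_T(A) for every A in the algebra. -/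
/-!
An operator `B` of propagation at most `m` is local: `P U * B * P W = 0` as soon as `W` misses the
`(m + 4)`-neighbourhood of `U`. Since `X` is separable, vanishing almost everywhere on a set can be
tested on countably many unit balls; with the definition of propagation this shows that
`B P(ball b s)` is supported in `ball b (s + m + 2)`, by adjoints `P(ball a 1) B` is supported in
`ball a (m + 3)`, and covering `U` by unit balls gives the general case. Consequently an operator
supported in `S(n)` times a finite-propagation operator is supported in `S(n + m + 4)`, so each
`J_S` is a two-sided ideal of the standard algebra; moreover `J_S` is monotone in `S`.

For `J_S ∩ J_T ⊆ J_{S∩T}`, approximate `A` by `B` supported in `S(N)` and by `C` supported in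
`T(N)`; then `P(T(N)) B P(T(N))` is supported in `S(N) ∩ T(N) ⊆ (S ∩ T)(m)` and lies as close to
`C = P(T(N)) C P(T(N))` as `B` does. Finally, if `Y` and `Z` invert `c` modulo `J_S` and modulo
`J_T`, then `Y + Z - Y c Z` inverts it modulo `J_S ∩ J_T`.
-/

open MeasureTheory Metric Set

theorem thickening_natCast_add_subset {X : Type*} [PseudoEMetricSpace X] (S : Set X) (n m : ℕ) :
    thickening ((m : ℝ) + 4) (thickening (n : ℝ) S) ⊆ thickening ((n + m + 4 : ℕ) : ℝ) S :=
  (thickening_thickening_subset _ _ _).trans (thickening_mono (by push_cast; linarith) S)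

def AsymptoticallyIndependent {X : Type*} [PseudoEMetricSpace X] (S T : Set X) : Prop :=
  ∀ n : ℕ, 1 ≤ n → ∃ m : ℕ, 1 ≤ m ∧
    thickening (n : ℝ) S ∩ thickening (n : ℝ) T ⊆ thickening (m : ℝ) (S ∩ T)

theorem exists_inverse_mod_inter_iff {R S : Type*} [Ring R] [SetLike S R] [SubringClass S R]
    {A : S} {I K : Set R} (hI : ∀ x ∈ I, ∀ y ∈ A, x * y ∈ I) (hK : ∀ x ∈ K, ∀ y ∈ A, y * x ∈ K)
    {c : R} (hc : c ∈ A) :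
    (∃ Y ∈ A, Y * c - 1 ∈ I ∩ K ∧ c * Y - 1 ∈ I ∩ K) ↔
      (∃ Y ∈ A, Y * c - 1 ∈ I ∧ c * Y - 1 ∈ I) ∧ (∃ Y ∈ A, Y * c - 1 ∈ K ∧ c * Y - 1 ∈ K) := by
  refine ⟨fun ⟨Y, hY, hl, hr⟩ => ⟨⟨Y, hY, hl.1, hr.1⟩, ⟨Y, hY, hl.2, hr.2⟩⟩, ?_⟩
  rintro ⟨⟨Y, hY, hYl, hYr⟩, ⟨Z, hZ, hZl, hZr⟩⟩
  -- `1 - (Y + Z - Y c Z) c = (1 - Y c) (1 - Z c)`, and symmetrically on the other side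
  refine ⟨Y + Z - Y * c * Z, sub_mem (add_mem hY hZ) (mul_mem (mul_mem hY hc) hZ),
    ⟨?_, ?_⟩, ⟨?_, ?_⟩⟩
  · rw [show (Y + Z - Y * c * Z) * c - 1 = (Y * c - 1) * (1 - Z * c) by noncomm_ring]
    exact hI _ hYl _ (sub_mem (one_mem _) (mul_mem hZ hc))
  · rw [show (Y + Z - Y * c * Z) * c - 1 = (1 - Y * c) * (Z * c - 1) by noncomm_ring]
    exact hK _ hZl _ (sub_mem (one_mem _) (mul_mem hY hc))
  · rw [show c * (Y + Z - Y * c * Z) - 1 = (c * Y - 1) * (1 - c * Z) by noncomm_ring]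
    exact hI _ hYr _ (sub_mem (one_mem _) (mul_mem hc hZ))
  · rw [show c * (Y + Z - Y * c * Z) - 1 = (1 - c * Y) * (c * Z - 1) by noncomm_ring]
    exact hK _ hZr _ (sub_mem (one_mem _) (mul_mem hc hY))

namespace FinitePropagation

variable {X : Type*} [MeasurableSpace X] {μ : Measure X}
  {P : Set X → Lp ℂ 2 μ →L[ℂ] Lp ℂ 2 μ}

def IsIndicatorFamily (μ : Measure X) (P : Set X → Lp ℂ 2 μ →L[ℂ] Lp ℂ 2 μ) : Prop :=
  ∀ (S : Set X) (f : Lp ℂ 2 μ), (P S f : X → ℂ) =ᵐ[μ] S.indicator ⇑f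

namespace IsIndicatorFamily

theorem mul_eq (hP : IsIndicatorFamily μ P) (U V : Set X) : P U * P V = P (U ∩ V) := by
  ext f
  filter_upwards [hP U (P V f), hP (U ∩ V) f, (hP V f).indicator (s := U)] with x h1 h2 h3
  rw [mul_apply_eq_comp, h1, h2, h3, indicator_indicator]

theorem mul_comm (hP : IsIndicatorFamily μ P) (U V : Set X) : P U * P V = P V * P U := by
  rw [hP.mul_eq, hP.mul_eq, inter_comm]

theorem mul_self (hP : IsIndicatorFamily μ P) (U : Set X) : P U * P U = P U := by
  rw [hP.mul_eq, inter_self]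

theorem empty (hP : IsIndicatorFamily μ P) : P ∅ = 0 := by
  ext f
  filter_upwards [hP ∅ f, Lp.coeFn_zero (E := ℂ) (p := 2) (μ := μ)] with x h1 h2
  rw [h1, zero_apply, h2, indicator_empty, Pi.zero_apply]

theorem add_compl (hP : IsIndicatorFamily μ P) (U : Set X) : P U + P Uᶜ = 1 := by
  ext f
  filter_upwards [hP U f, hP Uᶜ f, Lp.coeFn_add (P U f) (P Uᶜ f)] with x h1 h2 h3
  rw [add_apply, h3, Pi.add_apply, h1, h2, indicator_self_add_compl_apply,
    one_apply_eq_self]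

theorem univ (hP : IsIndicatorFamily μ P) : P univ = 1 := by
  simpa [hP.empty] using hP.add_compl ∅

theorem norm_le_one (hP : IsIndicatorFamily μ P) (U : Set X) : ‖P U‖ ≤ 1 := by
  refine ContinuousLinearMap.opNorm_le_bound _ zero_le_one fun f => ?_
  rw [one_mul, Lp.norm_def, Lp.norm_def, eLpNorm_congr_ae (hP U f)]
  exact ENNReal.toReal_mono (Lp.eLpNorm_ne_top f) (eLpNorm_indicator_le _)

theorem isSelfAdjoint (hP : IsIndicatorFamily μ P) (U : Set X) : IsSelfAdjoint (P U) := by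
  rw [ContinuousLinearMap.isSelfAdjoint_iff', eq_comm, ContinuousLinearMap.eq_adjoint_iff]
  intro f g
  rw [L2.inner_def, L2.inner_def]
  refine integral_congr_ae ?_
  filter_upwards [hP U f, hP U g] with x h1 h2
  rw [h1, h2]
  by_cases hx : x ∈ U <;> simp [hx]

theorem mul_eq_zero_of_forall_ball [MetricSpace X] [TopologicalSpace.SeparableSpace X]
    (hP : IsIndicatorFamily μ P) {B : Lp ℂ 2 μ →L[ℂ] Lp ℂ 2 μ} {U : Set X} {r : ℝ} (hr : 0 < r)
    (h : ∀ a, (ball a r ∩ U).Nonempty → P (ball a r) * B = 0) : P U * B = 0 := by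
  obtain ⟨D, hDc, hDd⟩ := TopologicalSpace.exists_countable_dense X
  ext f
  have hae : ∀ᵐ x ∂μ, ∀ a ∈ {a ∈ D | (ball a r ∩ U).Nonempty},
      (ball a r).indicator (B f) x = 0 := by
    rw [ae_ball_iff (hDc.mono fun a ha => ha.1)]
    intro a ha
    have hzero := hP (ball a r) (B f)
    rw [← mul_apply_eq_comp, h a ha.2, zero_apply] at hzero
    filter_upwards [hzero, Lp.coeFn_zero (E := ℂ) (p := 2) (μ := μ)] with x h1 h2
    rw [← h1, h2, Pi.zero_apply]
  filter_upwards [hP U (B f), hae, Lp.coeFn_zero (E := ℂ) (p := 2) (μ := μ)] with x hU hx h0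
  rw [mul_apply_eq_comp, hU, zero_apply, h0, Pi.zero_apply]
  by_cases hxU : x ∈ U
  · obtain ⟨a, haD, hxa⟩ := Metric.mem_closure_iff.1 (hDd x) r hr
    rw [indicator_of_mem hxU, ← indicator_of_mem (mem_ball.2 hxa) (B f)]
    exact hx a ⟨haD, x, hxa, hxU⟩
  · exact indicator_of_notMem hxU _

end IsIndicatorFamily

theorem eq_P_mul_mul_P_iff (hP : IsIndicatorFamily μ P) {U : Set X}
    {A : Lp ℂ 2 μ →L[ℂ] Lp ℂ 2 μ} : A = P U * A * P U ↔ P U * A = A ∧ A * P U = A := by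
  constructor
  · intro h
    constructor
    · rw [h, ← mul_assoc, ← mul_assoc, hP.mul_self]
    · rw [h, mul_assoc, hP.mul_self]
  · rintro ⟨hl, hr⟩
    rw [hl, hr]

theorem eq_P_mul_mul_P_of_subset (hP : IsIndicatorFamily μ P) {U V : Set X}
    {A : Lp ℂ 2 μ →L[ℂ] Lp ℂ 2 μ} (hA : A = P U * A * P U) (hUV : U ⊆ V) :
    A = P V * A * P V := by
  rw [eq_P_mul_mul_P_iff hP] at hA ⊢
  constructor
  · rw [← hA.1, ← mul_assoc, hP.mul_eq, inter_eq_right.2 hUV]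
  · rw [← hA.2, mul_assoc, hP.mul_eq, inter_eq_left.2 hUV]

theorem P_inter_mul_mul_P_inter (hP : IsIndicatorFamily μ P) {U : Set X}
    {A : Lp ℂ 2 μ →L[ℂ] Lp ℂ 2 μ} (hA : A = P U * A * P U) (V : Set X) :
    P (U ∩ V) * A * P (U ∩ V) = P V * A * P V := by
  rw [eq_P_mul_mul_P_iff hP] at hA
  have hleft : P (U ∩ V) * A = P V * A := by rw [inter_comm, ← hP.mul_eq, mul_assoc, hA.1]
  have hright : A * P (U ∩ V) = A * P V := by rw [← hP.mul_eq, ← mul_assoc, hA.2]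
  rw [hleft, mul_assoc, hright, mul_assoc]

theorem dist_P_mul_mul_P_le (hP : IsIndicatorFamily μ P) (U : Set X)
    (A B : Lp ℂ 2 μ →L[ℂ] Lp ℂ 2 μ) : dist (P U * A * P U) (P U * B * P U) ≤ dist A B := by
  rw [dist_eq_norm, dist_eq_norm, ← sub_mul, ← mul_sub]
  calc ‖P U * (A - B) * P U‖ ≤ ‖P U‖ * ‖A - B‖ * ‖P U‖ := norm_mul₃_le
    _ ≤ 1 * ‖A - B‖ * 1 := by gcongr <;> exact hP.norm_le_one U
    _ = ‖A - B‖ := by ring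

variable [MetricSpace X]

def HasPropagationLE (P : Set X → Lp ℂ 2 μ →L[ℂ] Lp ℂ 2 μ) (m : ℝ)
    (A : Lp ℂ 2 μ →L[ℂ] Lp ℂ 2 μ) : Prop :=
  ∀ (a b : X) (r s : ℝ), 0 < r → 0 < s →
    P (ball a r) * A * P (ball b s) ≠ 0 → dist a b ≤ r + s + m

theorem hasPropagationLE_P (hP : IsIndicatorFamily μ P) (W : Set X) :
    HasPropagationLE P 0 (P W) := by
  intro a b r s hr hs hne
  obtain ⟨x, ⟨hxa, -⟩, hxb⟩ : (ball a r ∩ W ∩ ball b s).Nonempty := by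
    rw [nonempty_iff_ne_empty]
    rintro h
    rw [hP.mul_eq, hP.mul_eq, h, hP.empty] at hne
    exact hne rfl
  linarith [dist_triangle_left a b x, mem_ball.1 hxa, mem_ball.1 hxb]

namespace HasPropagationLE

variable {m m₁ m₂ : ℝ} {A B : Lp ℂ 2 μ →L[ℂ] Lp ℂ 2 μ}

theorem P_ball_mul_mul_P_ball_eq_zero (hA : HasPropagationLE P m A) {a b : X} {r s : ℝ}
    (hr : 0 < r) (hs : 0 < s) (h : r + s + m < dist a b) :
    P (ball a r) * A * P (ball b s) = 0 := by
  by_contra hne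
  linarith [hA a b r s hr hs hne]

theorem add (hA : HasPropagationLE P m₁ A) (hB : HasPropagationLE P m₂ B) :
    HasPropagationLE P (max m₁ m₂) (A + B) := by
  intro a b r s hr hs hne
  rw [mul_add, add_mul] at hne
  by_cases hA0 : P (ball a r) * A * P (ball b s) = 0
  · rw [hA0, zero_add] at hne
    linarith [hB a b r s hr hs hne, le_max_right m₁ m₂]
  · linarith [hA a b r s hr hs hA0, le_max_left m₁ m₂]

theorem smul (hA : HasPropagationLE P m A) (c : ℂ) : HasPropagationLE P m (c • A) := by
  intro a b r s hr hs hne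
  refine hA a b r s hr hs fun h0 => hne ?_
  rw [mul_smul_comm, smul_mul_assoc, h0, smul_zero]

theorem star (hP : IsIndicatorFamily μ P) (hA : HasPropagationLE P m A) :
    HasPropagationLE P m (star A) := by
  intro a b r s hr hs hne
  have hswap : P (ball b s) * A * P (ball a r) ≠ 0 := fun h0 => hne <| by
    simpa [star_mul, (hP.isSelfAdjoint _).star_eq, mul_assoc] using congrArg Star.star h0
  linarith [hA b a s r hs hr hswap, dist_comm a b]

end HasPropagationLE

variable [TopologicalSpace.SeparableSpace X]

namespace HasPropagationLE

variable {m m₁ m₂ : ℝ} {A B : Lp ℂ 2 μ →L[ℂ] Lp ℂ 2 μ}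

theorem P_ball_add_mul_mul_P_ball (hP : IsIndicatorFamily μ P) (hA : HasPropagationLE P m A)
    (b : X) {s : ℝ} (hs : 0 < s) :
    P (ball b (s + m + 2)) * A * P (ball b s) = A * P (ball b s) := by
  have hfar : P (ball b (s + m + 2))ᶜ * (A * P (ball b s)) = 0 := by
    refine hP.mul_eq_zero_of_forall_ball one_pos fun a ⟨x, hxa, hxb⟩ => ?_
    rw [← mul_assoc]
    refine hA.P_ball_mul_mul_P_ball_eq_zero one_pos hs ?_
    have hxb' : s + m + 2 ≤ dist x b := not_lt.1 hxb
    linarith [dist_triangle_left x b a, mem_ball'.1 hxa]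
  calc P (ball b (s + m + 2)) * A * P (ball b s)
      = (P (ball b (s + m + 2)) + P (ball b (s + m + 2))ᶜ) * (A * P (ball b s)) := by
        rw [add_mul, hfar, add_zero, mul_assoc]
    _ = A * P (ball b s) := by rw [hP.add_compl, one_mul]

theorem P_ball_mul_mul_P_ball_add (hP : IsIndicatorFamily μ P) (hA : HasPropagationLE P m A)
    (a : X) {r : ℝ} (hr : 0 < r) :
    P (ball a r) * A * P (ball a (r + m + 2)) = P (ball a r) * A := by
  simpa [star_mul, (hP.isSelfAdjoint _).star_eq, mul_assoc] using
    congrArg Star.star ((hA.star hP).P_ball_add_mul_mul_P_ball hP a hr)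

theorem P_mul_mul_P_eq_zero_of_disjoint (hP : IsIndicatorFamily μ P) (hB : HasPropagationLE P m B)
    {U W : Set X} (h : Disjoint (thickening (m + 4) U) W) : P U * B * P W = 0 := by
  rw [mul_assoc]
  refine hP.mul_eq_zero_of_forall_ball one_pos fun a ⟨x, hxa, hxU⟩ => ?_
  have hball : ball a (1 + m + 2) ⊆ thickening (m + 4) U := fun y hy =>
    mem_thickening_iff.2 ⟨x, hxU, by linarith [dist_triangle y a x, mem_ball.1 hy, mem_ball'.1 hxa]⟩
  rw [← mul_assoc, ← hB.P_ball_mul_mul_P_ball_add hP a one_pos, mul_assoc, hP.mul_eq,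
    (h.mono_left hball).inter_eq, hP.empty, mul_zero]

theorem P_mul_mul_P_eq_P_mul_of_thickening_subset (hP : IsIndicatorFamily μ P)
    (hB : HasPropagationLE P m B) {U V : Set X} (h : thickening (m + 4) U ⊆ V) :
    P U * B * P V = P U * B := by
  have hfar := hB.P_mul_mul_P_eq_zero_of_disjoint hP (disjoint_compl_right_iff_subset.2 h)
  rw [← add_zero (P U * B * P V), ← hfar, ← mul_add, hP.add_compl, mul_one]

theorem P_mul_mul_P_eq_mul_P_of_thickening_subset (hP : IsIndicatorFamily μ P)
    (hB : HasPropagationLE P m B) {U V : Set X} (h : thickening (m + 4) U ⊆ V) :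
    P V * B * P U = B * P U := by
  simpa [star_mul, (hP.isSelfAdjoint _).star_eq, mul_assoc] using
    congrArg Star.star ((hB.star hP).P_mul_mul_P_eq_P_mul_of_thickening_subset hP h)

theorem mul (hP : IsIndicatorFamily μ P) (hA : HasPropagationLE P m₁ A)
    (hB : HasPropagationLE P m₂ B) (hm₂ : 0 ≤ m₂) :
    HasPropagationLE P (m₁ + m₂ + 2) (A * B) := by
  intro a b r s hr hs hne
  refine (hA a b r (s + m₂ + 2) hr (by linarith) fun h0 => hne ?_).trans (by linarith)
  rw [mul_assoc, mul_assoc, ← hB.P_ball_add_mul_mul_P_ball hP b hs]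
  simp only [← mul_assoc, h0, zero_mul]

end HasPropagationLE

def finPropSubalgebra (hP : IsIndicatorFamily μ P) : Subalgebra ℂ (Lp ℂ 2 μ →L[ℂ] Lp ℂ 2 μ) where
  carrier := ⋃ m : ℕ, {A | HasPropagationLE P m A}
  mul_mem' := by
    simp only [mem_iUnion, mem_ofPred_eq]
    rintro A B ⟨m₁, hA⟩ ⟨m₂, hB⟩
    exact ⟨m₁ + m₂ + 2, by exact_mod_cast hA.mul hP hB m₂.cast_nonneg⟩
  add_mem' := by
    simp only [mem_iUnion, mem_ofPred_eq]
    rintro A B ⟨m₁, hA⟩ ⟨m₂, hB⟩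
    exact ⟨max m₁ m₂, by exact_mod_cast hA.add hB⟩
  algebraMap_mem' z := by
    simp only [mem_iUnion, mem_ofPred_eq, Algebra.algebraMap_eq_smul_one, ← hP.univ]
    exact ⟨0, by exact_mod_cast (hasPropagationLE_P hP univ).smul z⟩

noncomputable def stdAlgebra (hP : IsIndicatorFamily μ P) :
    Subalgebra ℂ (Lp ℂ 2 μ →L[ℂ] Lp ℂ 2 μ) :=
  (finPropSubalgebra hP).topologicalClosure

theorem coe_stdAlgebra (hP : IsIndicatorFamily μ P) :
    (stdAlgebra hP : Set (Lp ℂ 2 μ →L[ℂ] Lp ℂ 2 μ)) =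
      closure (⋃ m : ℕ, {A | HasPropagationLE P m A}) :=
  Subalgebra.topologicalClosure_coe _

theorem P_mem_stdAlgebra (hP : IsIndicatorFamily μ P) (W : Set X) : P W ∈ stdAlgebra hP :=
  Subalgebra.le_topologicalClosure _ (mem_iUnion.2 ⟨0, by exact_mod_cast hasPropagationLE_P hP W⟩)

def localizedOps (hP : IsIndicatorFamily μ P) (S : Set X) : Set (Lp ℂ 2 μ →L[ℂ] Lp ℂ 2 μ) :=
  {A | A ∈ stdAlgebra hP ∧
    ∃ n : ℕ, A = P (thickening (n : ℝ) S) * A * P (thickening (n : ℝ) S)}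

def localIdeal (hP : IsIndicatorFamily μ P) (S : Set X) : Set (Lp ℂ 2 μ →L[ℂ] Lp ℂ 2 μ) :=
  closure (localizedOps hP S)

theorem localIdeal_mono (hP : IsIndicatorFamily μ P) {S T : Set X} (h : S ⊆ T) :
    localIdeal hP S ⊆ localIdeal hP T :=
  closure_mono fun _ ⟨hA, n, hn⟩ =>
    ⟨hA, n, eq_P_mul_mul_P_of_subset hP hn (thickening_subset_of_subset _ h)⟩

theorem P_mul_mul_P_mem_localizedOps (hP : IsIndicatorFamily μ P) {S W : Set X} {n : ℕ}
    (hW : W ⊆ thickening n S) {A : Lp ℂ 2 μ →L[ℂ] Lp ℂ 2 μ} (hA : A ∈ stdAlgebra hP) :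
    P W * A * P W ∈ localizedOps hP S := by
  refine ⟨mul_mem (mul_mem (P_mem_stdAlgebra hP W) hA) (P_mem_stdAlgebra hP W), n,
    eq_P_mul_mul_P_of_subset hP ?_ hW⟩
  rw [eq_P_mul_mul_P_iff hP]
  exact ⟨by rw [← mul_assoc, ← mul_assoc, hP.mul_self], by rw [mul_assoc, hP.mul_self]⟩

theorem mul_mem_localizedOps_right (hP : IsIndicatorFamily μ P) {S : Set X}
    {x y : Lp ℂ 2 μ →L[ℂ] Lp ℂ 2 μ} (hx : x ∈ localizedOps hP S) (hy : y ∈ finPropSubalgebra hP) :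
    x * y ∈ localizedOps hP S := by
  obtain ⟨hx𝒜, n, hxn⟩ := hx
  obtain ⟨m, hm⟩ := mem_iUnion.1 hy
  refine ⟨mul_mem hx𝒜 (Subalgebra.le_topologicalClosure _ hy), n + m + 4, ?_⟩
  set U := thickening (n : ℝ) S
  set V := thickening ((n + m + 4 : ℕ) : ℝ) S
  have hUV : thickening ((m : ℝ) + 4) U ⊆ V := thickening_natCast_add_subset S n m
  have hxV := eq_P_mul_mul_P_of_subset hP hxn ((self_subset_thickening (by positivity) _).trans hUV)
  rw [eq_P_mul_mul_P_iff hP] at hxn hxV ⊢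
  refine ⟨by rw [← mul_assoc, hxV.1], ?_⟩
  calc x * y * P V = x * P U * y * P V := by rw [hxn.2]
    _ = x * (P U * y * P V) := by simp only [mul_assoc]
    _ = x * y := by rw [hm.P_mul_mul_P_eq_P_mul_of_thickening_subset hP hUV, ← mul_assoc, hxn.2]

theorem mul_mem_localizedOps_left (hP : IsIndicatorFamily μ P) {S : Set X}
    {x y : Lp ℂ 2 μ →L[ℂ] Lp ℂ 2 μ} (hx : x ∈ localizedOps hP S) (hy : y ∈ finPropSubalgebra hP) :
    y * x ∈ localizedOps hP S := by
  obtain ⟨hx𝒜, n, hxn⟩ := hx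
  obtain ⟨m, hm⟩ := mem_iUnion.1 hy
  refine ⟨mul_mem (Subalgebra.le_topologicalClosure _ hy) hx𝒜, n + m + 4, ?_⟩
  set U := thickening (n : ℝ) S
  set V := thickening ((n + m + 4 : ℕ) : ℝ) S
  have hUV : thickening ((m : ℝ) + 4) U ⊆ V := thickening_natCast_add_subset S n m
  have hxV := eq_P_mul_mul_P_of_subset hP hxn ((self_subset_thickening (by positivity) _).trans hUV)
  rw [eq_P_mul_mul_P_iff hP] at hxn hxV ⊢
  refine ⟨?_, by rw [mul_assoc, hxV.2]⟩
  calc P V * (y * x) = P V * y * P U * x := by rw [mul_assoc (P V * y), hxn.1, mul_assoc]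
    _ = y * x := by rw [hm.P_mul_mul_P_eq_mul_P_of_thickening_subset hP hUV, mul_assoc, hxn.1]

theorem localIdeal.mul_mem_right (hP : IsIndicatorFamily μ P) {S : Set X}
    {x y : Lp ℂ 2 μ →L[ℂ] Lp ℂ 2 μ} (hx : x ∈ localIdeal hP S) (hy : y ∈ stdAlgebra hP) :
    x * y ∈ localIdeal hP S :=
  map_mem_closure₂ continuous_mul hx (by rwa [← Subalgebra.topologicalClosure_coe])
    fun _ ha _ hb => mul_mem_localizedOps_right hP ha hb

theorem localIdeal.mul_mem_left (hP : IsIndicatorFamily μ P) {S : Set X}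
    {x y : Lp ℂ 2 μ →L[ℂ] Lp ℂ 2 μ} (hy : y ∈ stdAlgebra hP) (hx : x ∈ localIdeal hP S) :
    y * x ∈ localIdeal hP S :=
  map_mem_closure₂ continuous_mul (by rwa [← Subalgebra.topologicalClosure_coe]) hx
    fun _ hb _ ha => mul_mem_localizedOps_left hP ha hb

theorem localIdeal_inter (hP : IsIndicatorFamily μ P) {S T : Set X}
    (hST : AsymptoticallyIndependent S T) :
    localIdeal hP (S ∩ T) = localIdeal hP S ∩ localIdeal hP T := by
  refine (subset_inter (localIdeal_mono hP inter_subset_left)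
    (localIdeal_mono hP inter_subset_right)).antisymm ?_
  rintro A ⟨hAS, hAT⟩
  refine Metric.mem_closure_iff.2 fun ε hε => ?_
  obtain ⟨B, ⟨hB𝒜, n, hBn⟩, hAB⟩ := Metric.mem_closure_iff.1 hAS (ε / 3) (by positivity)
  obtain ⟨C, ⟨-, k, hCk⟩, hAC⟩ := Metric.mem_closure_iff.1 hAT (ε / 3) (by positivity)
  set N := max n k + 1
  obtain ⟨m, -, hm⟩ := hST N (by omega)
  set TN := thickening (N : ℝ) T
  have hBN : B = P (thickening N S) * B * P (thickening N S) :=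
    eq_P_mul_mul_P_of_subset hP hBn (thickening_mono (by norm_cast; omega) S)
  have hCN : C = P TN * C * P TN :=
    eq_P_mul_mul_P_of_subset hP hCk (thickening_mono (by norm_cast; omega) T)
  -- `P(S(N) ∩ T(N)) B P(S(N) ∩ T(N)) = P(T(N)) B P(T(N))` is as close to `C` as `B` is
  refine ⟨_, P_mul_mul_P_mem_localizedOps hP hm hB𝒜, ?_⟩
  rw [P_inter_mul_mul_P_inter hP hBN]
  calc dist A (P TN * B * P TN) ≤ dist A C + dist (P TN * C * P TN) (P TN * B * P TN) := by
        rw [← hCN]; exact dist_triangle _ _ _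
    _ ≤ dist A C + (dist C A + dist A B) := by
        grw [dist_P_mul_mul_P_le hP, dist_triangle C A B]
    _ < ε := by rw [dist_comm C A]; linarith

end FinitePropagation

open FinitePropagation

theorem stmt15_general {X : Type*} [MetricSpace X] [TopologicalSpace.SeparableSpace X]
    [MeasurableSpace X]
    (μ : Measure X)
    (P : Set X → (Lp ℂ 2 μ →L[ℂ] Lp ℂ 2 μ))
    (hP : ∀ (S : Set X) (f : Lp ℂ 2 μ), (P S f : X → ℂ) =ᵐ[μ] S.indicator ⇑f)
    (𝒜 : ℝ → Set (Lp ℂ 2 μ →L[ℂ] Lp ℂ 2 μ))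
    (h𝒜 : ∀ m : ℝ, 𝒜 m = {A | ∀ (a b : X) (r s : ℝ), 0 < r → 0 < s →
      P (ball a r) * A * P (ball b s) ≠ 0 → dist a b ≤ r + s + m})
    (𝒜std : Set (Lp ℂ 2 μ →L[ℂ] Lp ℂ 2 μ))
    (hstd : 𝒜std = closure (⋃ m : ℕ, 𝒜 (m : ℝ)))
    (J : Set X → Set (Lp ℂ 2 μ →L[ℂ] Lp ℂ 2 μ))
    (hJ : ∀ S : Set X, J S = closure {A | A ∈ 𝒜std ∧
      ∃ n : ℕ, A = P (thickening (n : ℝ) S) * A * P (thickening (n : ℝ) S)})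
    (σ : Set X → (Lp ℂ 2 μ →L[ℂ] Lp ℂ 2 μ) → Set ℂ)
    (hσ : ∀ (S : Set X) (A : Lp ℂ 2 μ →L[ℂ] Lp ℂ 2 μ),
      σ S A = {z : ℂ | ¬ ∃ Y ∈ 𝒜std,
        Y * (z • (1 : Lp ℂ 2 μ →L[ℂ] Lp ℂ 2 μ) - A) - 1 ∈ J S ∧
        (z • (1 : Lp ℂ 2 μ →L[ℂ] Lp ℂ 2 μ) - A) * Y - 1 ∈ J S})
    (S T : Set X)
    (hindep : ∀ n : ℕ, 1 ≤ n → ∃ m : ℕ, 1 ≤ m ∧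
      thickening (n : ℝ) S ∩ thickening (n : ℝ) T ⊆ thickening (m : ℝ) (S ∩ T)) :
    J (S ∩ T) = J S ∩ J T ∧
      ∀ A ∈ 𝒜std, σ (S ∩ T) A = σ S A ∪ σ T A := by
  have hP' : IsIndicatorFamily μ P := hP
  obtain rfl : 𝒜std = stdAlgebra hP' := by
    rw [hstd, coe_stdAlgebra, funext h𝒜]
    rfl
  obtain rfl : J = localIdeal hP' := funext hJ
  have hJ_inter : localIdeal hP' (S ∩ T) = localIdeal hP' S ∩ localIdeal hP' T :=
    localIdeal_inter hP' hindep
  refine ⟨hJ_inter, fun A hA => ?_⟩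
  ext z
  have hc : z • 1 - A ∈ stdAlgebra hP' := sub_mem (Subalgebra.smul_mem _ (one_mem _) z) hA
  simp only [hσ, mem_union, mem_ofPred_eq, SetLike.mem_coe, ← not_and_or, hJ_inter]
  rw [exists_inverse_mod_inter_iff (fun _ hx _ hy => localIdeal.mul_mem_right hP' hx hy)
    (fun _ hx _ hy => localIdeal.mul_mem_left hP' hy hx) hc]

/-- In the standard C*-algebra `𝒜std` of finite-propagation operators on
`L²(X, μ)`, each nonempty open set `S` with `S(n) ≠ X` for all `n` determines a closed
ideal `J_S`, the norm closure of `{A ∈ 𝒜std : ∃ n, A = P(S(n)) A P(S(n))}`, where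
`S(n) = thickening n S`.  If `S, T` are asymptotically independent (for all `n ≥ 1` there
is `m ≥ 1` with `S(n) ∩ T(n) ⊆ (S ∩ T)(m)`), then `J_{S∩T} = J_S ∩ J_T` and, for the
quotient spectra `σ_S(A)` (defined by non-invertibility modulo the ideal),
`σ_{S∩T}(A) = σ_S(A) ∪ σ_T(A)` for every `A ∈ 𝒜std`. -/
theorem stmt15 {X : Type*} [MetricSpace X] [TopologicalSpace.SeparableSpace X]
    [ProperSpace X] [MeasurableSpace X] [BorelSpace X]
    (μ : Measure X)
    (hball : ∀ (a : X) (r : ℝ), 0 < r → 0 < μ (ball a r) ∧ μ (ball a r) < ⊤)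
    (P : Set X → (Lp ℂ 2 μ →L[ℂ] Lp ℂ 2 μ))
    (hP : ∀ (S : Set X) (f : Lp ℂ 2 μ), (P S f : X → ℂ) =ᵐ[μ] S.indicator ⇑f)
    (𝒜 : ℝ → Set (Lp ℂ 2 μ →L[ℂ] Lp ℂ 2 μ))
    (h𝒜 : ∀ m : ℝ, 𝒜 m = {A | ∀ (a b : X) (r s : ℝ), 0 < r → 0 < s →
      P (ball a r) * A * P (ball b s) ≠ 0 → dist a b ≤ r + s + m})
    (𝒜std : Set (Lp ℂ 2 μ →L[ℂ] Lp ℂ 2 μ))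
    (hstd : 𝒜std = closure (⋃ m : ℕ, 𝒜 (m : ℝ)))
    (J : Set X → Set (Lp ℂ 2 μ →L[ℂ] Lp ℂ 2 μ))
    (hJ : ∀ S : Set X, J S = closure {A | A ∈ 𝒜std ∧
      ∃ n : ℕ, A = P (thickening (n : ℝ) S) * A * P (thickening (n : ℝ) S)})
    (σ : Set X → (Lp ℂ 2 μ →L[ℂ] Lp ℂ 2 μ) → Set ℂ)
    (hσ : ∀ (S : Set X) (A : Lp ℂ 2 μ →L[ℂ] Lp ℂ 2 μ),
      σ S A = {z : ℂ | ¬ ∃ Y ∈ 𝒜std,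
        Y * (z • (1 : Lp ℂ 2 μ →L[ℂ] Lp ℂ 2 μ) - A) - 1 ∈ J S ∧
        (z • (1 : Lp ℂ 2 μ →L[ℂ] Lp ℂ 2 μ) - A) * Y - 1 ∈ J S})
    (S T : Set X)
    (hS : S.Nonempty ∧ IsOpen S ∧ ∀ n : ℕ, thickening (n : ℝ) S ≠ Set.univ)
    (hT : T.Nonempty ∧ IsOpen T ∧ ∀ n : ℕ, thickening (n : ℝ) T ≠ Set.univ)
    (hindep : ∀ n : ℕ, 1 ≤ n → ∃ m : ℕ, 1 ≤ m ∧
      thickening (n : ℝ) S ∩ thickening (n : ℝ) T ⊆ thickening (m : ℝ) (S ∩ T)) :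
    J (S ∩ T) = J S ∩ J T ∧
      ∀ A ∈ 𝒜std, σ (S ∩ T) A = σ S A ∪ σ T A :=
  stmt15_general μ P hP 𝒜 h𝒜 𝒜std hstd J hJ σ hσ S T hindep
end

section
/- Let r : U → A be a pseudo-resolvent on a unital associative algebra, fix α ∈ U, and let Ũ = {z ∈ C : 1 + (z − α) r_α is invertible}. Then U ⊆ Ũ, the formula r̃_z = r_α (1 + (z − α) r_α)^{-1} extends r to a pseudo-resolvent on Ũ, and this extension is maximal: any pseudo-resolvent extending r̃ has domain Ũ. Moreover Ũ does not depend on the choice of α ∈ U. -/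
/-!
Everything rests on the identity `(1 + (w - γ) r_γ)(1 + (γ - β) r_β) = 1 + (w - β) r_β` for
`β, γ ∈ U`, a rearrangement of the resolvent identity. With `w = β` it exhibits
`1 + (γ - β) r_β` as a unit whose inverse is `1 + (β - γ) r_γ`, which gives `U ⊆ Ũ` and,
applied to a pseudo-resolvent extension on `V`, maximality; for general `w` it shows that
`1 + (w - β) r_β` and `1 + (w - γ) r_γ` differ by a unit factor, so `Ũ` does not depend
on the base point. The extension `z ↦ a (1 + (z - α) a)⁻¹` is a pseudo-resolvent for any `a`,
by the second resolvent identity `u⁻¹ - v⁻¹ = u⁻¹ (v - u) v⁻¹`.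
-/

section PseudoResolvent

variable {R A : Type*} [CommRing R] [Ring A] [Algebra R A]

def IsPseudoResolventOn (U : Set R) (r : R → A) : Prop :=
  ∀ α ∈ U, ∀ γ ∈ U, r α - r γ = (γ - α) • (r α * r γ)

namespace IsPseudoResolventOn

variable {U : Set R} {r : R → A}

theorem one_add_smul_mul_one_add_smul (hr : IsPseudoResolventOn U r) {β γ : R}
    (hβ : β ∈ U) (hγ : γ ∈ U) (w : R) :
    (1 + (w - γ) • r γ) * (1 + (γ - β) • r β) = 1 + (w - β) • r β := by
  have hγβ : (γ - β) • (r γ * r β) = r β - r γ := by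
    rw [← neg_sub β γ, neg_smul, ← hr γ hγ β hβ, neg_sub]
  calc (1 + (w - γ) • r γ) * (1 + (γ - β) • r β)
      = 1 + (γ - β) • r β + (w - γ) • r γ + (w - γ) • ((γ - β) • (r γ * r β)) := by
        simp only [mul_add, add_mul, one_mul, mul_one, smul_mul_assoc, mul_smul_comm]
        module
    _ = 1 + (w - β) • r β := by
        rw [hγβ]
        module

theorem isUnit_one_add_smul (hr : IsPseudoResolventOn U r) {α z : R}
    (hα : α ∈ U) (hz : z ∈ U) : IsUnit (1 + (z - α) • r α) := by
  have hleft := hr.one_add_smul_mul_one_add_smul hα hz α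
  have hright := hr.one_add_smul_mul_one_add_smul hz hα z
  simp only [sub_self, zero_smul, add_zero] at hleft hright
  exact ⟨⟨_, _, hright, hleft⟩, rfl⟩

theorem isUnit_one_add_smul_iff (hr : IsPseudoResolventOn U r) {α β : R}
    (hα : α ∈ U) (hβ : β ∈ U) (z : R) :
    IsUnit (1 + (z - β) • r β) ↔ IsUnit (1 + (z - α) • r α) := by
  rw [← hr.one_add_smul_mul_one_add_smul hα hβ z,
    IsUnit.mul_right_iff (hr.isUnit_one_add_smul hα hβ)]

theorem one_add_smul_mul_eq (hr : IsPseudoResolventOn U r) {α z : R}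
    (hα : α ∈ U) (hz : z ∈ U) : (1 + (z - α) • r α) * r z = r α := by
  rw [add_mul, one_mul, smul_mul_assoc, ← hr α hα z hz, add_sub_cancel]

end IsPseudoResolventOn

section Extension

noncomputable def pseudoResolventExtension (a : A) (α z : R) : A :=
  a * Ring.inverse (1 + (z - α) • a)

variable (a : A) (α : R) {z : R}

theorem pseudoResolventExtension_self : pseudoResolventExtension a α α = a := by
  simp [pseudoResolventExtension]

theorem pseudoResolventExtension_mul (hz : IsUnit (1 + (z - α) • a)) :
    pseudoResolventExtension a α z * (1 + (z - α) • a) = a := by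
  rw [pseudoResolventExtension, mul_assoc, Ring.inverse_mul_cancel _ hz, mul_one]

theorem mul_pseudoResolventExtension (hz : IsUnit (1 + (z - α) • a)) :
    (1 + (z - α) • a) * pseudoResolventExtension a α z = a := by
  have hcomm : Commute (1 + (z - α) • a) a :=
    (Commute.one_left a).add_left ((Commute.refl a).smul_left _)
  rw [pseudoResolventExtension, ← mul_assoc, hcomm.eq, mul_assoc,
    Ring.mul_inverse_cancel _ hz, mul_one]

theorem isPseudoResolventOn_pseudoResolventExtension :
    IsPseudoResolventOn {z | IsUnit (1 + (z - α) • a)} (pseudoResolventExtension a α) := by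
  intro z hz w hw
  have hsub : (1 + (w - α) • a) - (1 + (z - α) • a) = (w - z) • a := by module
  simp only [pseudoResolventExtension]
  rw [← mul_sub, Ring.inverse_sub_inverse (iff_of_true hz hw), hsub]
  simp only [smul_mul_assoc, mul_smul_comm, mul_assoc]

end Extension

theorem IsPseudoResolventOn.pseudoResolventExtension_eq {U : Set R} {r : R → A}
    (hr : IsPseudoResolventOn U r) {α z : R} (hα : α ∈ U) (hz : z ∈ U) :
    pseudoResolventExtension (r α) α z = r z :=
  (hr.isUnit_one_add_smul hα hz).mul_left_cancel <| by
    rw [mul_pseudoResolventExtension _ _ (hr.isUnit_one_add_smul hα hz),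
      hr.one_add_smul_mul_eq hα hz]

end PseudoResolvent

theorem stmt17_general {A : Type*} [Ring A] [Algebra ℂ A]
    (U : Set ℂ) (r : ℂ → A)
    (hr : ∀ α ∈ U, ∀ γ ∈ U, r α - r γ = (γ - α) • (r α * r γ))
    (α : ℂ) (hα : α ∈ U)
    (Ut : Set ℂ) (hUt : Ut = {z : ℂ | IsUnit (1 + (z - α) • r α)}) :
    U ⊆ Ut ∧
    (∃ rt : ℂ → A,
      (∀ z ∈ U, rt z = r z) ∧
      (∀ z ∈ Ut, rt z * (1 + (z - α) • r α) = r α ∧ (1 + (z - α) • r α) * rt z = r α) ∧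
      (∀ z ∈ Ut, ∀ w ∈ Ut, rt z - rt w = (w - z) • (rt z * rt w)) ∧
      -- maximality: any pseudo-resolvent extension of `rt` has domain `Ut`
      (∀ (V : Set ℂ) (r' : ℂ → A), Ut ⊆ V → (∀ z ∈ Ut, r' z = rt z) →
        (∀ z ∈ V, ∀ w ∈ V, r' z - r' w = (w - z) • (r' z * r' w)) → V = Ut)) ∧
    -- independence of the choice of `α`
    (∀ β ∈ U, {z : ℂ | IsUnit (1 + (z - β) • r β)} = Ut) := by
  have hr : IsPseudoResolventOn U r := hr
  subst hUt
  have hU : U ⊆ {z | IsUnit (1 + (z - α) • r α)} := fun z hz => hr.isUnit_one_add_smul hα hz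
  refine ⟨hU, ⟨pseudoResolventExtension (r α) α, fun z hz => hr.pseudoResolventExtension_eq hα hz,
    fun z hz => ⟨pseudoResolventExtension_mul _ _ hz, mul_pseudoResolventExtension _ _ hz⟩,
    isPseudoResolventOn_pseudoResolventExtension _ _, ?_⟩, ?_⟩
  · intro V r' hV hr'_ext hr'
    have hr'α : r' α = r α := (hr'_ext α (hU hα)).trans (pseudoResolventExtension_self _ _)
    refine Set.Subset.antisymm (fun z hz => ?_) hV
    show IsUnit _
    simpa only [hr'α] using IsPseudoResolventOn.isUnit_one_add_smul hr' (hV (hU hα)) hz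
  · intro β hβ
    ext z
    exact hr.isUnit_one_add_smul_iff hα hβ z

/-- Let `r : U → A` be a pseudo-resolvent on a unital associative algebra,
`α ∈ U`, and `Ut = {z : 1 + (z - α) • r α is invertible}`.  Then `U ⊆ Ut`; there is an
extension `rt` of `r` to `Ut` satisfying `rt z * (1 + (z - α) • r α) = r α`
(i.e. `rt z = r α (1 + (z - α) r α)⁻¹`) which is again a pseudo-resolvent; this extension
is maximal, in the sense that any pseudo-resolvent on a set `V ⊇ Ut` extending `rt` has
`V = Ut`; and `Ut` does not depend on the choice of `α ∈ U`. -/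
theorem stmt17 {A : Type*} [Ring A] [Algebra ℂ A]
    (U : Set ℂ) (hU : U.Nonempty) (r : ℂ → A)
    (hr : ∀ α ∈ U, ∀ γ ∈ U, r α - r γ = (γ - α) • (r α * r γ))
    (α : ℂ) (hα : α ∈ U)
    (Ut : Set ℂ) (hUt : Ut = {z : ℂ | IsUnit (1 + (z - α) • r α)}) :
    U ⊆ Ut ∧
    (∃ rt : ℂ → A,
      (∀ z ∈ U, rt z = r z) ∧
      (∀ z ∈ Ut, rt z * (1 + (z - α) • r α) = r α ∧ (1 + (z - α) • r α) * rt z = r α) ∧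
      (∀ z ∈ Ut, ∀ w ∈ Ut, rt z - rt w = (w - z) • (rt z * rt w)) ∧
      -- maximality: any pseudo-resolvent extension of `rt` has domain `Ut`
      (∀ (V : Set ℂ) (r' : ℂ → A), Ut ⊆ V → (∀ z ∈ Ut, r' z = rt z) →
        (∀ z ∈ V, ∀ w ∈ V, r' z - r' w = (w - z) • (r' z * r' w)) → V = Ut)) ∧
    -- independence of the choice of `α`
    (∀ β ∈ U, {z : ℂ | IsUnit (1 + (z - β) • r β)} = Ut) :=
  stmt17_general U r hr α hα Ut hUt
end

section
/- Let J be a two-sided ideal in a unital associative algebra A and π : A → A/J the quotient map. If r : U → A is a maximal pseudo-resolvent, then the spectrum of the pseudo-resolvent π ∘ r in A/J is contained in the spectrum of r: σ(π(r)) ⊆ σ(r). -/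
/-! The resolvent identity `r α - r γ = (γ - α) • r α r γ` says exactly that `1 - (γ - α) • r γ`
is a two-sided inverse of `1 + (γ - α) • r α`; algebra homomorphisms preserve units, so every
point of `U` stays outside the spectrum of `π ∘ r`. -/

theorem one_add_smul_mul_one_sub_smul_eq_one {R A : Type*} [CommRing R] [Ring A] [Algebra R A]
    {x y : A} {d : R} (h : x - y = d • (x * y)) : (1 + d • x) * (1 - d • y) = 1 := by
  calc (1 + d • x) * (1 - d • y) = 1 + d • (x - y) - (d * d) • (x * y) := by
        rw [add_mul, mul_sub, mul_sub, smul_mul_smul_comm, smul_sub]; simp only [one_mul, mul_one]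
        abel
    _ = 1 := by rw [h, smul_smul, add_sub_cancel_right]

theorem isUnit_one_add_smul_of_resolvent_identity {R A : Type*} [CommRing R] [Ring A]
    [Algebra R A] {r : R → A} {α γ : R} (hαγ : r α - r γ = (γ - α) • (r α * r γ))
    (hγα : r γ - r α = (α - γ) • (r γ * r α)) : IsUnit (1 + (γ - α) • r α) := by
  have hright := one_add_smul_mul_one_sub_smul_eq_one hαγ
  have hleft := one_add_smul_mul_one_sub_smul_eq_one hγα
  rw [← neg_sub γ α, neg_smul, neg_smul, sub_neg_eq_add, ← sub_eq_add_neg] at hleft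
  exact isUnit_iff_exists.mpr ⟨_, hright, hleft⟩

theorem stmt18_general {A B : Type*} [Ring A] [Algebra ℂ A] [Ring B] [Algebra ℂ B]
    (π : A →ₐ[ℂ] B)
    (U : Set ℂ) (r : ℂ → A)
    (hr : ∀ α ∈ U, ∀ γ ∈ U, r α - r γ = (γ - α) • (r α * r γ))
    (α : ℂ) (hα : α ∈ U) :
    {z : ℂ | ¬ IsUnit (1 + (z - α) • π (r α))} ⊆ Uᶜ := by
  intro z hz hzU
  apply hz
  simpa only [map_add, map_one, map_smul] using
    (isUnit_one_add_smul_of_resolvent_identity (hr α hα z hzU) (hr z hzU α hα)).map π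

/-- Let `π : A → A/J` be the quotient map by a two-sided ideal of a unital
associative algebra (represented by a surjective algebra homomorphism `π : A → B`).  If
`r : U → A` is a maximal pseudo-resolvent, then the spectrum of the pseudo-resolvent
`π ∘ r` is contained in the spectrum `ℂ \ U` of `r`; here the spectrum of a
pseudo-resolvent is the complement of the domain of its maximal extension, namely
`{z : ¬ IsUnit (1 + (z - α) • (π (r α)))}` for any `α ∈ U`. -/
theorem stmt18 {A B : Type*} [Ring A] [Algebra ℂ A] [Ring B] [Algebra ℂ B]
    (π : A →ₐ[ℂ] B) (hπ : Function.Surjective π)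
    (U : Set ℂ) (r : ℂ → A)
    (hr : ∀ α ∈ U, ∀ γ ∈ U, r α - r γ = (γ - α) • (r α * r γ))
    -- maximality of the pseudo-resolvent `r`
    (hmax : ∀ α ∈ U, ∀ z : ℂ, IsUnit (1 + (z - α) • r α) → z ∈ U)
    (α : ℂ) (hα : α ∈ U) :
    {z : ℂ | ¬ IsUnit (1 + (z - α) • π (r α))} ⊆ Uᶜ :=
  stmt18_general π U r hr α hα
end
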